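/- arXiv:0810.2856 — 5 statements merged into one kernel-verified Lean document; each statement's English description precedes it below -/
import Mathlib

section
/- Let d = 2 and let 𝒜 be a nonempty bounded set of complex 2×2 matrices with 𝒜^2 ≠ {0}. Then for every n ≥ 1: C_2^{-σ_2(n)/n} · (‖𝒜‖^2 / ‖𝒜^2‖)^{-ν_2(n)/n} · ‖𝒜^n‖^{1/n} ≤ ρ(𝒜) ≤ ‖𝒜^n‖^{1/n}, where C_2 = 2^{3} = 8 (i.e. d^{3d/2} with d = 2), σ_2(n) = (1/2)(ln n/ln 2 + 1)(ln n/ln 2 + 2), and ν_2(n) = ln n/ln 2 + 1. -/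
open scoped Pointwise

/-- `ν` is a norm on `ℂ^d`. -/
structure IsNorm (d : ℕ) (ν : (Fin d → ℂ) → ℝ) : Prop where
  nonneg : ∀ v, 0 ≤ ν v
  eq_zero_iff : ∀ v, ν v = 0 ↔ v = 0
  homog : ∀ (c : ℂ) (v), ν (c • v) = ‖c‖ * ν v
  triangle : ∀ v w, ν (v + w) ≤ ν v + ν w

/-- Operator norm on `d × d` complex matrices induced by the norm `ν` on `ℂ^d`. -/
noncomputable def opNorm {d : ℕ} (ν : (Fin d → ℂ) → ℝ)
    (A : Matrix (Fin d) (Fin d) ℂ) : ℝ :=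
  sInf {c : ℝ | 0 ≤ c ∧ ∀ v, ν (A.mulVec v) ≤ c * ν v}

/-- Norm of a set of matrices: the supremum of the norms of its elements. -/
noncomputable def setNorm {d : ℕ} (ν : (Fin d → ℂ) → ℝ)
    (𝒜 : Set (Matrix (Fin d) (Fin d) ℂ)) : ℝ :=
  sSup (opNorm ν '' 𝒜)

/-- Joint spectral radius of a set of matrices: `ρ(𝒜) = inf_{n ≥ 1} ‖𝒜^n‖^{1/n}`. -/
noncomputable def jsr {d : ℕ} (ν : (Fin d → ℂ) → ℝ)
    (𝒜 : Set (Matrix (Fin d) (Fin d) ℂ)) : ℝ :=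
  ⨅ n : {n : ℕ // 1 ≤ n}, setNorm ν (𝒜 ^ (n : ℕ)) ^ (((n : ℕ) : ℝ)⁻¹)
/-- `σ_2(n) = (1/2)(ln n/ln 2 + 1)(ln n/ln 2 + 2)` -/
noncomputable def sigmaBound2 (n : ℕ) : ℝ :=
  (1 / 2) * (Real.log n / Real.log 2 + 1) * (Real.log n / Real.log 2 + 2)

/-- `ν_2(n) = ln n/ln 2 + 1` -/
noncomputable def nuBound2 (n : ℕ) : ℝ :=
  Real.log n / Real.log 2 + 1

/-!
Let `A, B` be `2 × 2` matrices with `‖A‖, ‖B‖ ≤ S`, whose eigenvalues are at most `R` in modulus,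
those of `AB` at most `R²`. Subtracting eigenvalues `α` of `A` and `β` of `B` leaves matrices
`A' = A - α`, `B' = B - β` of rank one, and for rank-one matrices
`‖A'B'‖ ‖B'A'‖ = |tr (A'B')| ‖A'‖ ‖B'‖`. For one of the two choices of `β` the trace is at most
`9R²/2`, while both `‖A'B'‖` and `‖B'A'‖` differ from `‖AB‖` by `O(RS + R²)`; for `B'A'` this uses
that `AB + BA` is a combination of `A`, `B` and `1` with coefficients given by traces
(Cayley–Hamilton). Together these force `‖AB‖ ≤ 8RS`.

Eigenvalues of products in `𝒜^m` are at most `ρ(𝒜)^m`, so this gives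
`‖𝒜^{2m}‖ ≤ 8 ρ^m ‖𝒜^m‖`, and `‖𝒜‖ ≤ 8Kρ` with `K = ‖𝒜‖² / ‖𝒜²‖` (the case `m = 1`). Writing
`n = 2m` or `2m + 1` and inducting gives `‖𝒜^n‖ ≤ 8^{σ₂(n)} K^{ν₂(n)} ρ^n`, which is the lower
bound; the upper bound is the definition of `ρ` as an infimum.
-/

open Matrix

/-- `ℂ^d` normed by `ν`, so that `opNorm ν A` is the operator norm of `A` acting on it. -/
def WithNorm {d : ℕ} (_ν : (Fin d → ℂ) → ℝ) : Type := Fin d → ℂ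

namespace WithNorm

variable {d : ℕ} {ν : (Fin d → ℂ) → ℝ}

instance : AddCommGroup (WithNorm ν) := inferInstanceAs (AddCommGroup (Fin d → ℂ))
instance : Module ℂ (WithNorm ν) := inferInstanceAs (Module ℂ (Fin d → ℂ))
instance : FiniteDimensional ℂ (WithNorm ν) := inferInstanceAs (FiniteDimensional ℂ (Fin d → ℂ))
instance : Norm (WithNorm ν) := ⟨ν⟩

def mk (ν : (Fin d → ℂ) → ℝ) (x : Fin d → ℂ) : WithNorm ν := x

theorem norm_mk (x : Fin d → ℂ) : ‖mk ν x‖ = ν x :=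
  rfl

variable [hν : Fact (IsNorm d ν)]

theorem normedSpaceCore : NormedSpace.Core ℂ (WithNorm ν) where
  norm_nonneg := hν.out.nonneg
  norm_smul := hν.out.homog
  norm_triangle := hν.out.triangle
  norm_eq_zero_iff := hν.out.eq_zero_iff

noncomputable instance : NormedAddCommGroup (WithNorm ν) := .ofCore normedSpaceCore
noncomputable instance : NormedSpace ℂ (WithNorm ν) := .ofCore normedSpaceCore

end WithNorm

noncomputable def Matrix.toWithNormCLM {d : ℕ} (ν : (Fin d → ℂ) → ℝ) [Fact (IsNorm d ν)] :
    Matrix (Fin d) (Fin d) ℂ ≃ₐ[ℂ] (WithNorm ν →L[ℂ] WithNorm ν) :=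
  toLinAlgEquiv'.trans (Module.End.toContinuousLinearMap (WithNorm ν))

noncomputable def Matrix.dotProductCLM {d : ℕ} (ν : (Fin d → ℂ) → ℝ) [Fact (IsNorm d ν)]
    (φ : Fin d → ℂ) : WithNorm ν →L[ℂ] ℂ :=
  LinearMap.toContinuousLinearMap (dotProductBilin ℂ ℂ φ)

section OpNorm

variable {d : ℕ} {ν : (Fin d → ℂ) → ℝ}

theorem opNorm_nonneg (A : Matrix (Fin d) (Fin d) ℂ) : 0 ≤ opNorm ν A :=
  Real.sInf_nonneg fun _ hc => hc.1

variable [Fact (IsNorm d ν)]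

theorem toWithNormCLM_mk (A : Matrix (Fin d) (Fin d) ℂ) (x : Fin d → ℂ) :
    toWithNormCLM ν A (.mk ν x) = .mk ν (A *ᵥ x) :=
  rfl

theorem opNorm_eq_norm_toWithNormCLM (A : Matrix (Fin d) (Fin d) ℂ) :
    opNorm ν A = ‖toWithNormCLM ν A‖ := by
  rw [ContinuousLinearMap.norm_def]
  rfl

theorem norm_mulVec_le (A : Matrix (Fin d) (Fin d) ℂ) (v : Fin d → ℂ) :
    ν (A *ᵥ v) ≤ opNorm ν A * ν v := by
  simpa only [opNorm_eq_norm_toWithNormCLM, toWithNormCLM_mk, WithNorm.norm_mk] using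
    (toWithNormCLM ν A).le_opNorm (.mk ν v)

theorem opNorm_mul_le (A B : Matrix (Fin d) (Fin d) ℂ) :
    opNorm ν (A * B) ≤ opNorm ν A * opNorm ν B := by
  simp only [opNorm_eq_norm_toWithNormCLM, map_mul]
  exact norm_mul_le _ _

theorem opNorm_add_le (A B : Matrix (Fin d) (Fin d) ℂ) :
    opNorm ν (A + B) ≤ opNorm ν A + opNorm ν B := by
  simp only [opNorm_eq_norm_toWithNormCLM, map_add]
  exact norm_add_le _ _

theorem opNorm_sub_le (A B : Matrix (Fin d) (Fin d) ℂ) :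
    opNorm ν (A - B) ≤ opNorm ν A + opNorm ν B := by
  simp only [opNorm_eq_norm_toWithNormCLM, map_sub]
  exact norm_sub_le _ _

theorem opNorm_smul (c : ℂ) (A : Matrix (Fin d) (Fin d) ℂ) :
    opNorm ν (c • A) = ‖c‖ * opNorm ν A := by
  simp only [opNorm_eq_norm_toWithNormCLM, map_smul, norm_smul]

theorem opNorm_one_le : opNorm ν (1 : Matrix (Fin d) (Fin d) ℂ) ≤ 1 := by
  rw [opNorm_eq_norm_toWithNormCLM, map_one]
  exact ContinuousLinearMap.norm_id_le

theorem opNorm_pos {A : Matrix (Fin d) (Fin d) ℂ} (hA : A ≠ 0) : 0 < opNorm ν A := by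
  rw [opNorm_eq_norm_toWithNormCLM]
  exact norm_pos_iff.2 ((map_ne_zero_iff _ (toWithNormCLM ν).injective).2 hA)

theorem opNorm_sub_smul_one_le (A : Matrix (Fin d) (Fin d) ℂ) (c : ℂ) :
    opNorm ν (A - c • 1) ≤ opNorm ν A + ‖c‖ := by
  grw [opNorm_sub_le, opNorm_smul, opNorm_one_le, mul_one]

theorem opNorm_mul_le_opNorm_sub_smul_one_mul (A B : Matrix (Fin d) (Fin d) ℂ) (α β : ℂ) :
    opNorm ν (A * B) ≤
      opNorm ν ((A - α • 1) * (B - β • 1)) + ‖β‖ * opNorm ν (A - α • 1) + ‖α‖ * opNorm ν B := by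
  have h : A * B = (A - α • 1) * (B - β • 1) + β • (A - α • 1) + α • B := by
    simp only [sub_mul, mul_sub, smul_mul_assoc, mul_smul_comm, one_mul, mul_one, smul_sub,
      smul_smul, mul_comm β α]
    abel
  conv_lhs => rw [h]
  grw [opNorm_add_le, opNorm_add_le, opNorm_smul, opNorm_smul]

theorem opNorm_mul_le_opNorm_sub_smul_one_mul' (A B : Matrix (Fin d) (Fin d) ℂ) (α β : ℂ) :
    opNorm ν (B * A) ≤
      opNorm ν ((B - β • 1) * (A - α • 1)) + ‖β‖ * opNorm ν (A - α • 1) + ‖α‖ * opNorm ν B := by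
  have h : B * A = (B - β • 1) * (A - α • 1) + β • (A - α • 1) + α • B := by
    simp only [sub_mul, mul_sub, smul_mul_assoc, mul_smul_comm, one_mul, mul_one, smul_sub,
      smul_smul, mul_comm β α]
    abel
  conv_lhs => rw [h]
  grw [opNorm_add_le, opNorm_add_le, opNorm_smul, opNorm_smul]

theorem norm_pow_le_opNorm_pow_of_det_eq_zero {A : Matrix (Fin d) (Fin d) ℂ} {γ : ℂ}
    (hγ : (A - γ • 1).det = 0) (k : ℕ) : ‖γ‖ ^ k ≤ opNorm ν (A ^ k) := by
  obtain ⟨w, hw, hAw⟩ := exists_mulVec_eq_zero_iff.2 hγ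
  have h_eig : A *ᵥ w = γ • w := by
    rwa [sub_mulVec, smul_mulVec, one_mulVec, sub_eq_zero] at hAw
  have h_pow : (A ^ k) *ᵥ w = γ ^ k • w := by
    induction k with
    | zero => simp
    | succ k ih => rw [pow_succ, ← mulVec_mulVec, h_eig, mulVec_smul, ih, smul_smul, pow_succ']
  have hν : IsNorm d ν := Fact.out
  have hνw : 0 < ν w := (hν.nonneg w).lt_of_ne' ((hν.eq_zero_iff w).not.2 hw)
  refine le_of_mul_le_mul_right ?_ hνw
  calc ‖γ‖ ^ k * ν w = ν ((A ^ k) *ᵥ w) := by rw [h_pow, hν.homog, norm_pow]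
    _ ≤ opNorm ν (A ^ k) * ν w := norm_mulVec_le _ _

theorem toWithNormCLM_vecMulVec (u φ : Fin d → ℂ) :
    toWithNormCLM ν (vecMulVec u φ) = (dotProductCLM ν φ).smulRight (.mk ν u) := by
  ext1 x
  exact (vecMulVec_mulVec u φ x).trans (op_smul_eq_smul _ _)

theorem opNorm_vecMulVec (u φ : Fin d → ℂ) :
    opNorm ν (vecMulVec u φ) = ‖dotProductCLM ν φ‖ * ν u := by
  rw [opNorm_eq_norm_toWithNormCLM, toWithNormCLM_vecMulVec,
    ContinuousLinearMap.norm_smulRight_apply, WithNorm.norm_mk]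

theorem opNorm_vecMulVec_mul_mul_opNorm_vecMulVec_mul (u φ v ψ : Fin d → ℂ) :
    opNorm ν (vecMulVec u φ * vecMulVec v ψ) * opNorm ν (vecMulVec v ψ * vecMulVec u φ) =
      ‖(vecMulVec u φ * vecMulVec v ψ).trace‖ *
        (opNorm ν (vecMulVec u φ) * opNorm ν (vecMulVec v ψ)) := by
  simp only [vecMulVec_mul_vecMulVec, vecMulVec_smul, opNorm_smul, trace_smul, trace_vecMulVec,
    opNorm_vecMulVec, smul_eq_mul, norm_mul, dotProduct_comm u ψ]
  ring

end OpNorm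

theorem norm_add_sq_le_or_norm_sub_sq_le {𝕜 E : Type*} [RCLike 𝕜] [NormedAddCommGroup E]
    [InnerProductSpace 𝕜 E] (x y : E) :
    ‖x + y‖ ^ 2 ≤ ‖x‖ ^ 2 + ‖y‖ ^ 2 ∨ ‖x - y‖ ^ 2 ≤ ‖x‖ ^ 2 + ‖y‖ ^ 2 := by
  rw [norm_add_sq (𝕜 := 𝕜), norm_sub_sq (𝕜 := 𝕜)]
  rcases le_total (RCLike.re (inner 𝕜 x y)) 0 with h | h
  · left; linarith
  · right; linarith

theorem norm_sub_mul_sub_mul_le_or_le {t α₁ α₂ β₁ β₂ : ℂ} {R : ℝ} (ht : ‖t‖ ≤ 2 * R ^ 2)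
    (hα₁ : ‖α₁‖ ≤ R) (hα₂ : ‖α₂‖ ≤ R) (hβ₁ : ‖β₁‖ ≤ R) (hβ₂ : ‖β₂‖ ≤ R) :
    ‖t - α₁ * β₂ - α₂ * β₁‖ ≤ 9 / 2 * R ^ 2 ∨ ‖t - α₁ * β₁ - α₂ * β₂‖ ≤ 9 / 2 * R ^ 2 := by
  have hR : 0 ≤ R + R := by linarith [(norm_nonneg α₁).trans hα₁]
  -- the two expressions are `z + w` and `z - w`, and `‖z‖² + ‖w‖² ≤ (16 + 4) R⁴ ≤ (9R²/2)²`
  set z := t - (α₁ + α₂) * (β₁ + β₂) / 2 with hz_def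
  set w := (α₁ - α₂) * (β₁ - β₂) / 2 with hw_def
  have hz : ‖z‖ ≤ 4 * R ^ 2 :=
    calc ‖z‖ ≤ ‖t‖ + (‖α₁‖ + ‖α₂‖) * (‖β₁‖ + ‖β₂‖) / 2 := by
          grw [norm_sub_le, norm_div, norm_mul, norm_add_le α₁, norm_add_le β₁, Complex.norm_two]
      _ ≤ 2 * R ^ 2 + (R + R) * (R + R) / 2 := by gcongr
      _ = 4 * R ^ 2 := by ring
  have hw : ‖w‖ ≤ 2 * R ^ 2 :=
    calc ‖w‖ ≤ (‖α₁‖ + ‖α₂‖) * (‖β₁‖ + ‖β₂‖) / 2 := by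
          grw [norm_div, norm_mul, norm_sub_le α₁, norm_sub_le β₁, Complex.norm_two]
      _ ≤ (R + R) * (R + R) / 2 := by gcongr
      _ = 2 * R ^ 2 := by ring
  have h_le : ∀ x : ℂ, ‖x‖ ^ 2 ≤ ‖z‖ ^ 2 + ‖w‖ ^ 2 → ‖x‖ ≤ 9 / 2 * R ^ 2 := fun x hx => by
    refine (pow_le_pow_iff_left₀ (norm_nonneg x) (by positivity) two_ne_zero).1 ?_
    nlinarith [pow_le_pow_left₀ (norm_nonneg z) hz 2, pow_le_pow_left₀ (norm_nonneg w) hw 2]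
  rw [show t - α₁ * β₂ - α₂ * β₁ = z + w by rw [hz_def, hw_def]; ring,
    show t - α₁ * β₁ - α₂ * β₂ = z - w by rw [hz_def, hw_def]; ring]
  exact (norm_add_sq_le_or_norm_sub_sq_le (𝕜 := ℂ) z w).imp (h_le _) (h_le _)

namespace Matrix

theorem exists_eq_vecMulVec_of_det_eq_zero {K : Type*} [Field K] {M : Matrix (Fin 2) (Fin 2) K}
    (h : M.det = 0) : ∃ u φ : Fin 2 → K, M = vecMulVec u φ := by
  rw [det_fin_two] at h
  by_cases h00 : M 0 0 = 0
  · by_cases h01 : M 0 1 = 0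
    · refine ⟨![0, 1], M 1, ?_⟩
      ext i j
      fin_cases i <;> fin_cases j <;> simp [vecMulVec_apply, h00, h01]
    · have h10 : M 1 0 = 0 := by
        simpa [h00, h01] using h
      refine ⟨![1, M 1 1 / M 0 1], M 0, ?_⟩
      ext i j
      fin_cases i <;> fin_cases j <;> simp [vecMulVec_apply, h00, h10, h01]
  · refine ⟨![1, M 1 0 / M 0 0], M 0, ?_⟩
    ext i j
    fin_cases i <;> fin_cases j <;>
      simp only [Fin.zero_eta, Fin.mk_one, vecMulVec_apply, cons_val_zero, cons_val_one,
        cons_val_fin_one, one_mul, div_mul_cancel₀ _ h00]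
    field_simp
    linear_combination h

theorem det_fin_two_sub_smul_one {R : Type*} [CommRing R] (M : Matrix (Fin 2) (Fin 2) R) (γ : R) :
    (M - γ • 1).det = M.det - M.trace * γ + γ ^ 2 := by
  simp only [det_fin_two, trace_fin_two, sub_apply, smul_apply, smul_eq_mul, one_apply_eq,
    one_apply_ne zero_ne_one, one_apply_ne one_ne_zero, mul_one, mul_zero, sub_zero]
  ring

theorem exists_eigenvalues_fin_two (M : Matrix (Fin 2) (Fin 2) ℂ) :
    ∃ γ₁ γ₂ : ℂ, γ₁ + γ₂ = M.trace ∧ (M - γ₁ • 1).det = 0 ∧ (M - γ₂ • 1).det = 0 := by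
  obtain ⟨s, hs⟩ := IsAlgClosed.exists_eq_mul_self (M.trace ^ 2 - 4 * M.det)
  refine ⟨(M.trace + s) / 2, (M.trace - s) / 2, by ring, ?_, ?_⟩ <;>
  · rw [det_fin_two_sub_smul_one]
    linear_combination -hs / 4

theorem norm_trace_le_of_eigenvalue_le {M : Matrix (Fin 2) (Fin 2) ℂ} {r : ℝ}
    (h : ∀ γ : ℂ, (M - γ • 1).det = 0 → ‖γ‖ ≤ r) : ‖M.trace‖ ≤ 2 * r := by
  obtain ⟨γ₁, γ₂, hsum, h₁, h₂⟩ := exists_eigenvalues_fin_two M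
  rw [← hsum]
  linarith [norm_add_le γ₁ γ₂, h γ₁ h₁, h γ₂ h₂]

theorem trace_sub_smul_one_mul_sub_smul_one {R : Type*} [CommRing R]
    (A B : Matrix (Fin 2) (Fin 2) R) (α β : R) :
    ((A - α • 1) * (B - β • 1)).trace =
      (A * B).trace - α * B.trace - β * A.trace + 2 * (α * β) := by
  simp only [trace_fin_two, mul_apply, Fin.sum_univ_two, sub_apply, smul_apply, smul_eq_mul,
    one_apply_eq, one_apply_ne zero_ne_one, one_apply_ne one_ne_zero, mul_one, mul_zero, sub_zero]
  ring

/-- Cayley–Hamilton, polarized. -/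
theorem mul_add_mul_fin_two {R : Type*} [CommRing R] (A B : Matrix (Fin 2) (Fin 2) R) :
    A * B + B * A = A.trace • B + B.trace • A + ((A * B).trace - A.trace * B.trace) • 1 := by
  ext i j
  fin_cases i <;> fin_cases j <;>
    simp only [Fin.zero_eta, Fin.mk_one, add_apply, mul_apply, Fin.sum_univ_two, trace_fin_two,
      smul_apply, smul_eq_mul, one_apply_eq, one_apply_ne zero_ne_one, one_apply_ne one_ne_zero,
      mul_one, mul_zero, add_zero] <;>
    ring

theorem exists_eigenvalues_norm_trace_le {A B : Matrix (Fin 2) (Fin 2) ℂ} {R : ℝ}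
    (hA : ∀ γ : ℂ, (A - γ • 1).det = 0 → ‖γ‖ ≤ R)
    (hB : ∀ γ : ℂ, (B - γ • 1).det = 0 → ‖γ‖ ≤ R)
    (hAB : ∀ γ : ℂ, (A * B - γ • 1).det = 0 → ‖γ‖ ≤ R ^ 2) :
    ∃ α β : ℂ, (A - α • 1).det = 0 ∧ (B - β • 1).det = 0 ∧
      ‖((A - α • 1) * (B - β • 1)).trace‖ ≤ 9 / 2 * R ^ 2 := by
  obtain ⟨α₁, α₂, hα, hα₁, hα₂⟩ := exists_eigenvalues_fin_two A
  obtain ⟨β₁, β₂, hβ, hβ₁, hβ₂⟩ := exists_eigenvalues_fin_two B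
  rcases norm_sub_mul_sub_mul_le_or_le (norm_trace_le_of_eigenvalue_le hAB) (hA α₁ hα₁)
    (hA α₂ hα₂) (hB β₁ hβ₁) (hB β₂ hβ₂) with h | h
  · refine ⟨α₁, β₁, hα₁, hβ₁, (congrArg norm ?_).trans_le h⟩
    rw [trace_sub_smul_one_mul_sub_smul_one, ← hα, ← hβ]
    ring
  · refine ⟨α₁, β₂, hα₁, hβ₂, (congrArg norm ?_).trans_le h⟩
    rw [trace_sub_smul_one_mul_sub_smul_one, ← hα, ← hβ]
    ring

end Matrix

section TwoByTwo

variable {ν : (Fin 2 → ℂ) → ℝ} [Fact (IsNorm 2 ν)]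

theorem opNorm_mul_mul_opNorm_mul_of_det_eq_zero {X Y : Matrix (Fin 2) (Fin 2) ℂ}
    (hX : X.det = 0) (hY : Y.det = 0) :
    opNorm ν (X * Y) * opNorm ν (Y * X) = ‖(X * Y).trace‖ * (opNorm ν X * opNorm ν Y) := by
  obtain ⟨u, φ, rfl⟩ := exists_eq_vecMulVec_of_det_eq_zero hX
  obtain ⟨v, ψ, rfl⟩ := exists_eq_vecMulVec_of_det_eq_zero hY
  exact opNorm_vecMulVec_mul_mul_opNorm_vecMulVec_mul u φ v ψ

theorem opNorm_mul_le_opNorm_mul_add_of_eigenvalue_le {A B : Matrix (Fin 2) (Fin 2) ℂ} {R S : ℝ}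
    (hA : opNorm ν A ≤ S) (hB : opNorm ν B ≤ S)
    (hA_eig : ∀ γ : ℂ, (A - γ • 1).det = 0 → ‖γ‖ ≤ R)
    (hB_eig : ∀ γ : ℂ, (B - γ • 1).det = 0 → ‖γ‖ ≤ R)
    (hAB_eig : ∀ γ : ℂ, (A * B - γ • 1).det = 0 → ‖γ‖ ≤ R ^ 2) :
    opNorm ν (A * B) ≤ opNorm ν (B * A) + 4 * R * S + 6 * R ^ 2 := by
  have htA := norm_trace_le_of_eigenvalue_le hA_eig
  have htB := norm_trace_le_of_eigenvalue_le hB_eig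
  have htAB := norm_trace_le_of_eigenvalue_le hAB_eig
  calc opNorm ν (A * B) = opNorm ν ((A * B + B * A) - B * A) := by rw [add_sub_cancel_right]
    _ ≤ opNorm ν (B * A) + ‖A.trace‖ * opNorm ν B + ‖B.trace‖ * opNorm ν A +
          (‖(A * B).trace‖ + ‖A.trace‖ * ‖B.trace‖) := by
        grw [opNorm_sub_le, mul_add_mul_fin_two, opNorm_add_le, opNorm_add_le, opNorm_smul,
          opNorm_smul, opNorm_smul, opNorm_one_le, mul_one, norm_sub_le, norm_mul]
        linarith
    _ ≤ opNorm ν (B * A) + 2 * R * S + 2 * R * S + (2 * R ^ 2 + 2 * R * (2 * R)) := by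
        have hR : 0 ≤ 2 * R := (norm_nonneg _).trans htA
        gcongr
        exacts [opNorm_nonneg B, opNorm_nonneg A]
    _ = opNorm ν (B * A) + 4 * R * S + 6 * R ^ 2 := by ring

theorem opNorm_mul_le_of_eigenvalue_le {A B : Matrix (Fin 2) (Fin 2) ℂ} {R S : ℝ}
    (hA : opNorm ν A ≤ S) (hB : opNorm ν B ≤ S)
    (hA_eig : ∀ γ : ℂ, (A - γ • 1).det = 0 → ‖γ‖ ≤ R)
    (hB_eig : ∀ γ : ℂ, (B - γ • 1).det = 0 → ‖γ‖ ≤ R)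
    (hAB_eig : ∀ γ : ℂ, (A * B - γ • 1).det = 0 → ‖γ‖ ≤ R ^ 2) :
    opNorm ν (A * B) ≤ 8 * R * S := by
  have hS : 0 ≤ S := (opNorm_nonneg A).trans hA
  obtain ⟨α, β, hα, hβ, h_tr⟩ := exists_eigenvalues_norm_trace_le hA_eig hB_eig hAB_eig
  have hαR := hA_eig α hα
  have hβR := hB_eig β hβ
  have hR : 0 ≤ R := (norm_nonneg α).trans hαR
  rcases le_or_gt S (8 * R) with hSR | hSR
  · calc opNorm ν (A * B) ≤ opNorm ν A * opNorm ν B := opNorm_mul_le A B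
      _ ≤ S * S := mul_le_mul hA hB (opNorm_nonneg B) hS
      _ ≤ 8 * R * S := mul_le_mul_of_nonneg_right hSR hS
  by_contra! hε
  set A' := A - α • 1
  set B' := B - β • 1
  have hA' : opNorm ν A' ≤ S + R := by grw [opNorm_sub_smul_one_le, hA, hαR]
  have hB' : opNorm ν B' ≤ S + R := by grw [opNorm_sub_smul_one_le, hB, hβR]
  have hx : opNorm ν (A * B) ≤ opNorm ν (A' * B') + R * (S + R) + R * S := by
    grw [opNorm_mul_le_opNorm_sub_smul_one_mul A B α β, hA', hB, hαR, hβR]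
  have hy : opNorm ν (B * A) ≤ opNorm ν (B' * A') + R * (S + R) + R * S := by
    grw [opNorm_mul_le_opNorm_sub_smul_one_mul' A B α β, hA', hB, hαR, hβR]
  have hxy : opNorm ν (A' * B') * opNorm ν (B' * A') ≤ 9 / 2 * R ^ 2 * (S + R) ^ 2 := by
    rw [opNorm_mul_mul_opNorm_mul_of_det_eq_zero hα hβ, sq (S + R)]
    gcongr
    exacts [mul_nonneg (opNorm_nonneg A') (opNorm_nonneg B'), opNorm_nonneg B']
  have hBA := opNorm_mul_le_opNorm_mul_add_of_eigenvalue_le hA hB hA_eig hB_eig hAB_eig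
  -- with `ε = ‖AB‖ > 8RS` and `S > 8R`, `(ε - 2RS - R²)(ε - 6RS - 7R²) > 9R²(S + R)²/2`
  have hδ : 0 < opNorm ν (A * B) - 8 * R * S := by linarith
  have h_lower : (opNorm ν (A * B) - 2 * R * S - R ^ 2) *
      (opNorm ν (A * B) - 6 * R * S - 7 * R ^ 2) ≤ opNorm ν (A' * B') * opNorm ν (B' * A') :=
    mul_le_mul (by linarith) (by linarith) (by nlinarith) (opNorm_nonneg _)
  nlinarith [mul_pos hδ hδ, mul_nonneg hδ.le (mul_nonneg hR (by linarith : 0 ≤ S - R)),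
    mul_nonneg (mul_nonneg (sq_nonneg R) (by linarith : 0 ≤ S - 8 * R))
      (by linarith : 0 ≤ 15 * S + 14 * R), pow_nonneg hR 4]

end TwoByTwo

section JointSpectralRadius

variable {d : ℕ} {ν : (Fin d → ℂ) → ℝ} {𝒜 : Set (Matrix (Fin d) (Fin d) ℂ)}

theorem setNorm_nonneg (𝒜 : Set (Matrix (Fin d) (Fin d) ℂ)) : 0 ≤ setNorm ν 𝒜 :=
  Real.sSup_nonneg <| Set.forall_mem_image.2 fun A _ => opNorm_nonneg A

theorem jsr_nonneg : 0 ≤ jsr ν 𝒜 :=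
  Real.iInf_nonneg fun _ => Real.rpow_nonneg (setNorm_nonneg _) _

theorem jsr_le_setNorm_pow_rpow_inv {n : ℕ} (hn : 1 ≤ n) :
    jsr ν 𝒜 ≤ setNorm ν (𝒜 ^ n) ^ (n : ℝ)⁻¹ :=
  ciInf_le ⟨0, Set.forall_mem_range.2 fun _ => Real.rpow_nonneg (setNorm_nonneg _) _⟩
    (⟨n, hn⟩ : {n : ℕ // 1 ≤ n})

theorem le_jsr_of_pow_le {x : ℝ} (hx : 0 ≤ x) (h : ∀ k, 1 ≤ k → x ^ k ≤ setNorm ν (𝒜 ^ k)) :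
    x ≤ jsr ν 𝒜 :=
  le_ciInf fun ⟨k, hk⟩ =>
    calc x = (x ^ k) ^ (k : ℝ)⁻¹ := (Real.pow_rpow_inv_natCast hx (by omega)).symm
      _ ≤ setNorm ν (𝒜 ^ k) ^ (k : ℝ)⁻¹ := by gcongr; exact h k hk

variable [Fact (IsNorm d ν)]

theorem bddAbove_opNorm_image_pow (h𝒜 : BddAbove (opNorm ν '' 𝒜)) (j : ℕ) :
    BddAbove (opNorm ν '' (𝒜 ^ j)) := by
  obtain ⟨M, hM⟩ := h𝒜
  refine ⟨max M 0 ^ j, Set.forall_mem_image.2 fun P hP => ?_⟩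
  induction j generalizing P with
  | zero =>
    rw [pow_zero, Set.mem_one] at hP
    rw [hP, pow_zero]
    exact opNorm_one_le
  | succ k ih =>
    obtain ⟨Q, hQ, A, hA, rfl⟩ := hP
    rw [pow_succ]
    exact (opNorm_mul_le Q A).trans <| mul_le_mul (ih Q hQ)
      ((hM ⟨A, hA, rfl⟩).trans (le_max_left _ _)) (opNorm_nonneg A) (by positivity)

theorem opNorm_le_setNorm_pow (h𝒜 : BddAbove (opNorm ν '' 𝒜)) {j : ℕ} {P : Matrix (Fin d) (Fin d) ℂ}
    (hP : P ∈ 𝒜 ^ j) : opNorm ν P ≤ setNorm ν (𝒜 ^ j) :=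
  le_csSup (bddAbove_opNorm_image_pow h𝒜 j) ⟨P, hP, rfl⟩

theorem setNorm_pow_add_le (h𝒜 : BddAbove (opNorm ν '' 𝒜)) (i j : ℕ) :
    setNorm ν (𝒜 ^ (i + j)) ≤ setNorm ν (𝒜 ^ i) * setNorm ν (𝒜 ^ j) := by
  refine Real.sSup_le (Set.forall_mem_image.2 fun P hP => ?_)
    (mul_nonneg (setNorm_nonneg _) (setNorm_nonneg _))
  rw [pow_add] at hP
  obtain ⟨Q, hQ, R, hR, rfl⟩ := hP
  exact (opNorm_mul_le Q R).trans <| mul_le_mul (opNorm_le_setNorm_pow h𝒜 hQ)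
    (opNorm_le_setNorm_pow h𝒜 hR) (opNorm_nonneg R) (setNorm_nonneg _)

theorem setNorm_pow_mul_le (h𝒜 : BddAbove (opNorm ν '' 𝒜)) (m k : ℕ) :
    setNorm ν (𝒜 ^ (m * k)) ≤ setNorm ν (𝒜 ^ k) ^ m := by
  induction m with
  | zero =>
    refine Real.sSup_le (Set.forall_mem_image.2 fun P hP => ?_) zero_le_one
    rw [zero_mul, pow_zero, Set.mem_one] at hP
    rw [hP, pow_zero]
    exact opNorm_one_le
  | succ m ih =>
    rw [add_mul, one_mul, pow_succ]
    exact (setNorm_pow_add_le h𝒜 _ _).trans (by gcongr; exact setNorm_nonneg _)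

theorem norm_le_jsr_pow_of_det_eq_zero (h𝒜 : BddAbove (opNorm ν '' 𝒜)) {m : ℕ} (hm : 1 ≤ m)
    {A : Matrix (Fin d) (Fin d) ℂ} (hA : A ∈ 𝒜 ^ m) {γ : ℂ} (hγ : (A - γ • 1).det = 0) :
    ‖γ‖ ≤ jsr ν 𝒜 ^ m := by
  have hm₀ : m ≠ 0 := by omega
  set y := ‖γ‖ ^ (m : ℝ)⁻¹
  have hy : y ^ m = ‖γ‖ := Real.rpow_inv_natCast_pow (norm_nonneg γ) hm₀
  have hy_le : y ≤ jsr ν 𝒜 := le_jsr_of_pow_le (by positivity) fun k _ => by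
    refine (pow_le_pow_iff_left₀ (by positivity) (setNorm_nonneg _) hm₀).1 ?_
    calc (y ^ k) ^ m = ‖γ‖ ^ k := by rw [← pow_mul, mul_comm, pow_mul, hy]
      _ ≤ opNorm ν (A ^ k) := norm_pow_le_opNorm_pow_of_det_eq_zero hγ k
      _ ≤ setNorm ν (𝒜 ^ (m * k)) :=
          opNorm_le_setNorm_pow h𝒜 (by rw [pow_mul]; exact Set.pow_mem_pow hA)
      _ ≤ setNorm ν (𝒜 ^ k) ^ m := setNorm_pow_mul_le h𝒜 m k
  rw [← hy]
  gcongr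

end JointSpectralRadius

theorem setNorm_pow_add_self_le {ν : (Fin 2 → ℂ) → ℝ} [Fact (IsNorm 2 ν)]
    {𝒜 : Set (Matrix (Fin 2) (Fin 2) ℂ)} (h𝒜 : BddAbove (opNorm ν '' 𝒜)) {m : ℕ} (hm : 1 ≤ m) :
    setNorm ν (𝒜 ^ (m + m)) ≤ 8 * jsr ν 𝒜 ^ m * setNorm ν (𝒜 ^ m) := by
  refine Real.sSup_le (Set.forall_mem_image.2 fun P hP => ?_)
    (mul_nonneg (mul_nonneg (by norm_num) (pow_nonneg jsr_nonneg m)) (setNorm_nonneg _))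
  rw [pow_add] at hP
  obtain ⟨A, hA, B, hB, rfl⟩ := hP
  have hAB : A * B ∈ 𝒜 ^ (m + m) := by
    rw [pow_add]
    exact Set.mul_mem_mul hA hB
  refine opNorm_mul_le_of_eigenvalue_le (opNorm_le_setNorm_pow h𝒜 hA)
    (opNorm_le_setNorm_pow h𝒜 hB) (fun _ => norm_le_jsr_pow_of_det_eq_zero h𝒜 hm hA)
    (fun _ => norm_le_jsr_pow_of_det_eq_zero h𝒜 hm hB) fun _ hγ => ?_
  rw [← pow_mul, mul_two]
  exact norm_le_jsr_pow_of_det_eq_zero h𝒜 (by omega) hAB hγ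

theorem sigmaBound2_one : sigmaBound2 1 = 1 := by
  norm_num [sigmaBound2]

theorem nuBound2_one : nuBound2 1 = 1 := by
  norm_num [nuBound2]

theorem log_div_log_two_add_one_le {m j : ℕ} (hm : 1 ≤ m) (hj : 2 * m ≤ j) :
    Real.log m / Real.log 2 + 1 ≤ Real.log j / Real.log 2 := by
  have hm₀ : (0 : ℝ) < m := by exact_mod_cast hm
  rw [div_add_one (Real.log_pos one_lt_two).ne', ← Real.log_mul hm₀.ne' two_ne_zero]
  gcongr
  exact_mod_cast (by omega : m * 2 ≤ j)

theorem sigmaBound2_add_two_le {m j : ℕ} (hm : 1 ≤ m) (hj : 2 * m ≤ j) :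
    sigmaBound2 m + 2 ≤ sigmaBound2 j := by
  have h := log_div_log_two_add_one_le hm hj
  have h₀ : 0 ≤ Real.log m / Real.log 2 := by
    have : (1 : ℝ) ≤ m := by exact_mod_cast hm
    positivity
  unfold sigmaBound2
  nlinarith

theorem nuBound2_add_one_le {m j : ℕ} (hm : 1 ≤ m) (hj : 2 * m ≤ j) :
    nuBound2 m + 1 ≤ nuBound2 j := by
  unfold nuBound2
  linarith [log_div_log_two_add_one_le hm hj]

theorem le_rpow_sigmaBound2_mul_rpow_nuBound2_mul_pow {N : ℕ → ℝ} {c K ρ : ℝ} (hc : 1 ≤ c)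
    (hK : 1 ≤ K) (hρ : 0 ≤ ρ) (hN : ∀ j, 0 ≤ N j) (h_add : ∀ i j, N (i + j) ≤ N i * N j)
    (h_double : ∀ m, 1 ≤ m → N (m + m) ≤ c * ρ ^ m * N m) (h_one : N 1 ≤ c * K * ρ)
    {j : ℕ} (hj : 1 ≤ j) : N j ≤ c ^ sigmaBound2 j * K ^ nuBound2 j * ρ ^ j := by
  induction j using Nat.strong_induction_on with
  | _ j ih =>
  obtain rfl | hj₁ := hj.eq_or_lt
  · simpa [sigmaBound2_one, nuBound2_one] using h_one
  obtain ⟨m, r, hr, rfl⟩ : ∃ m r, r ≤ 1 ∧ j = m + m + r := ⟨j / 2, j % 2, by omega, by omega⟩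
  have hm : 1 ≤ m := by omega
  have h_even : N (m + m) ≤ c ^ (sigmaBound2 m + 1) * K ^ nuBound2 m * ρ ^ (m + m) :=
    calc N (m + m) ≤ c * ρ ^ m * N m := h_double m hm
      _ ≤ c * ρ ^ m * (c ^ sigmaBound2 m * K ^ nuBound2 m * ρ ^ m) := by
          gcongr
          exact ih m (by omega) hm
      _ = c ^ (sigmaBound2 m + 1) * K ^ nuBound2 m * ρ ^ (m + m) := by
          rw [Real.rpow_add_one (by positivity), pow_add]
          ring
  have h_mid :
      N (m + m + r) ≤ c ^ (sigmaBound2 m + 1 + 1) * K ^ (nuBound2 m + 1) * ρ ^ (m + m + r) := by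
    interval_cases r
    · rw [add_zero]
      refine h_even.trans ?_
      gcongr <;> linarith
    · calc N (m + m + 1) ≤ N (m + m) * N 1 := h_add _ _
        _ ≤ c ^ (sigmaBound2 m + 1) * K ^ nuBound2 m * ρ ^ (m + m) * (c * K * ρ) :=
          mul_le_mul h_even h_one (hN 1) (by positivity)
        _ = c ^ (sigmaBound2 m + 1 + 1) * K ^ (nuBound2 m + 1) * ρ ^ (m + m + 1) := by
          rw [Real.rpow_add_one (by positivity) (sigmaBound2 m + 1),
            Real.rpow_add_one (by positivity) (nuBound2 m), pow_succ]
          ring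
  refine h_mid.trans ?_
  gcongr
  · linarith [sigmaBound2_add_two_le hm (by omega : 2 * m ≤ m + m + r)]
  · exact nuBound2_add_one_le hm (by omega)

theorem rpow_neg_div_mul_rpow_neg_div_mul_rpow_inv_le {c K ρ N a b : ℝ} {n : ℕ} (hn : n ≠ 0)
    (hc : 0 < c) (hK : 0 < K) (hρ : 0 ≤ ρ) (hN : 0 ≤ N) (h : N ≤ c ^ a * K ^ b * ρ ^ n) :
    c ^ (-a / n) * K ^ (-b / n) * N ^ (n : ℝ)⁻¹ ≤ ρ := by
  have h' : c ^ (-a) * K ^ (-b) * N ≤ ρ ^ n := by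
    rw [Real.rpow_neg hc.le, Real.rpow_neg hK.le, ← mul_inv, inv_mul_le_iff₀ (by positivity)]
    exact h
  calc c ^ (-a / n) * K ^ (-b / n) * N ^ (n : ℝ)⁻¹ = (c ^ (-a) * K ^ (-b) * N) ^ (n : ℝ)⁻¹ := by
        rw [Real.mul_rpow (by positivity) hN, Real.mul_rpow (by positivity) (by positivity),
          ← Real.rpow_mul hc.le, ← Real.rpow_mul hK.le, div_eq_mul_inv, div_eq_mul_inv]
    _ ≤ (ρ ^ n) ^ (n : ℝ)⁻¹ := by gcongr
    _ = ρ := Real.pow_rpow_inv_natCast hρ hn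

/-- The main theorem for sets of 2×2 matrices, with `C_2 = 2^{3·2/2} = 8`. -/
theorem spectral_radius_gelfand_bounds_dim_two
    (𝒜 : Set (Matrix (Fin 2) (Fin 2) ℂ)) (h_ne : 𝒜.Nonempty)
    (ν : (Fin 2 → ℂ) → ℝ) (hν : IsNorm 2 ν)
    (h_bdd : ∃ M : ℝ, ∀ A ∈ 𝒜, opNorm ν A ≤ M)
    (h_nz : 𝒜 ^ 2 ≠ ({0} : Set (Matrix (Fin 2) (Fin 2) ℂ)))
    (n : ℕ) (hn : 1 ≤ n) :
    ((8 : ℝ)) ^ (-(sigmaBound2 n) / (n : ℝ)) *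
        (setNorm ν 𝒜 ^ 2 / setNorm ν (𝒜 ^ 2)) ^ (-(nuBound2 n) / (n : ℝ)) *
        setNorm ν (𝒜 ^ n) ^ ((n : ℝ)⁻¹) ≤ jsr ν 𝒜
      ∧ jsr ν 𝒜 ≤ setNorm ν (𝒜 ^ n) ^ ((n : ℝ)⁻¹) := by
  have : Fact (IsNorm 2 ν) := ⟨hν⟩
  obtain ⟨M, hM⟩ := h_bdd
  have h𝒜 : BddAbove (opNorm ν '' 𝒜) := ⟨M, Set.forall_mem_image.2 hM⟩
  refine ⟨?_, jsr_le_setNorm_pow_rpow_inv hn⟩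
  set ρ := jsr ν 𝒜
  set S := setNorm ν 𝒜
  set N₂ := setNorm ν (𝒜 ^ 2)
  obtain ⟨P, hP, hP₀⟩ : ∃ P ∈ 𝒜 ^ 2, P ≠ 0 := by
    by_contra! h
    exact h_nz (Set.eq_singleton_iff_nonempty_unique_mem.2 ⟨h_ne.pow, h⟩)
  have hN₂ : 0 < N₂ := (opNorm_pos hP₀).trans_le (opNorm_le_setNorm_pow h𝒜 hP)
  have hN₂_sq : N₂ ≤ S ^ 2 := by
    have h := setNorm_pow_add_le h𝒜 1 1
    rwa [one_add_one_eq_two, pow_one, ← sq] at h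
  have hN₂_ρ : N₂ ≤ 8 * ρ * S := by
    simpa only [one_add_one_eq_two, pow_one] using setNorm_pow_add_self_le h𝒜 le_rfl
  have hK : 1 ≤ S ^ 2 / N₂ := (one_le_div hN₂).2 hN₂_sq
  have h_one : setNorm ν (𝒜 ^ 1) ≤ 8 * (S ^ 2 / N₂) * ρ := by
    rw [pow_one, mul_div_assoc', div_mul_eq_mul_div, le_div_iff₀ hN₂]
    nlinarith [setNorm_nonneg (ν := ν) 𝒜]
  exact rpow_neg_div_mul_rpow_neg_div_mul_rpow_inv_le (by omega) (by norm_num)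
    (zero_lt_one.trans_le hK) jsr_nonneg (setNorm_nonneg _) <|
    le_rpow_sigmaBound2_mul_rpow_nuBound2_mul_pow (by norm_num) hK jsr_nonneg
      (fun _ => setNorm_nonneg _) (setNorm_pow_add_le h𝒜) (fun _ => setNorm_pow_add_self_le h𝒜)
      h_one hn
end

section
/- For every d ≥ 1, every complex d×d matrix A, and every norm ‖·‖ on ℂ^d (with induced operator norm on matrices): ‖A^d‖ ≤ (2^d − 1) · ρ(A) · ‖A‖^{d-1}, where ρ(A) is the spectral radius of A. -/
/-- Spectral radius of a matrix: the maximum of the moduli of its eigenvalues. -/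
noncomputable def specRad {d : ℕ} (A : Matrix (Fin d) (Fin d) ℂ) : ℝ :=
  sSup {r : ℝ | ∃ μ ∈ spectrum ℂ A, r = ‖μ‖}

/-! By Cayley–Hamilton, `A^d = -∑_{k<d} c_k A^k` with `c_k` the coefficients of the characteristic
polynomial. Vieta's formulas bound `|c_k| ≤ C(d,k) ρ^(d-k)`, and since `ρ ≤ ‖A‖` each term
`ρ^(d-k) ‖A‖^k` is at most `ρ ‖A‖^(d-1)`; summing `C(d,k)` over `k < d` gives `2^d - 1`. -/

open Polynomial

theorem sum_range_choose_mul_pow_le {r a : ℝ} (hr : 0 ≤ r) (hra : r ≤ a) (n : ℕ) :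
    ∑ k ∈ Finset.range n, r ^ (n - k) * n.choose k * a ^ k ≤ (2 ^ n - 1) * r * a ^ (n - 1) := by
  have hchoose : ∑ k ∈ Finset.range n, (n.choose k : ℝ) = 2 ^ n - 1 := by
    have := Finset.sum_range_succ (fun k => (n.choose k : ℝ)) n
    rw [← Nat.cast_sum, Nat.sum_range_choose] at this
    push_cast at this
    simp only [Nat.choose_self, Nat.cast_one] at this
    linarith
  have ha : 0 ≤ a := hr.trans hra
  have hterm : ∀ k ∈ Finset.range n,
      r ^ (n - k) * n.choose k * a ^ k ≤ n.choose k * r * a ^ (n - 1) := by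
    intro k hk
    obtain ⟨j, rfl⟩ : ∃ j, n = k + j + 1 := ⟨n - k - 1, by have := Finset.mem_range.mp hk; omega⟩
    have hpow : r ^ j * a ^ k ≤ a ^ (k + j) := by
      rw [pow_add, mul_comm]; gcongr
    calc r ^ (k + j + 1 - k) * (k + j + 1).choose k * a ^ k
        = (k + j + 1).choose k * r * (r ^ j * a ^ k) := by
          rw [show k + j + 1 - k = j + 1 by omega, pow_succ']; ring
      _ ≤ (k + j + 1).choose k * r * a ^ (k + j + 1 - 1) := by
          rw [Nat.add_sub_cancel]; gcongr
  calc ∑ k ∈ Finset.range n, r ^ (n - k) * n.choose k * a ^ k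
      ≤ ∑ k ∈ Finset.range n, n.choose k * r * a ^ (n - 1) := Finset.sum_le_sum hterm
    _ = (2 ^ n - 1) * r * a ^ (n - 1) := by rw [← Finset.sum_mul, ← Finset.sum_mul, hchoose]

section SpectralBound

variable {𝕜 E : Type*} [NontriviallyNormedField 𝕜] [SeminormedAddCommGroup E] [NormedSpace 𝕜 E]

theorem ContinuousLinearMap.norm_pow_le_pow_norm (T : E →L[𝕜] E) (k : ℕ) :
    ‖T ^ k‖ ≤ ‖T‖ ^ k := by
  rcases k.eq_zero_or_pos with rfl | hk
  · exact (pow_zero T).symm ▸ ContinuousLinearMap.norm_id_le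
  · exact norm_pow_le' T hk

theorem ContinuousLinearMap.norm_pow_natDegree_le_sum {T : E →L[𝕜] E} {p : 𝕜[X]}
    (hp : p.Monic) (hpT : aeval T p = 0) :
    ‖T ^ p.natDegree‖ ≤ ∑ k ∈ Finset.range p.natDegree, ‖p.coeff k‖ * ‖T‖ ^ k := by
  have hT : T ^ p.natDegree = -∑ k ∈ Finset.range p.natDegree, p.coeff k • T ^ k := by
    rw [aeval_eq_sum_range, Finset.sum_range_succ, hp.coeff_natDegree, one_smul] at hpT
    exact eq_neg_of_add_eq_zero_right hpT
  rw [hT, norm_neg]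
  refine (norm_sum_le _ _).trans (Finset.sum_le_sum fun k _ => ?_)
  exact (norm_smul_le _ _).trans (by gcongr; exact T.norm_pow_le_pow_norm k)

theorem ContinuousLinearMap.norm_pow_natDegree_le {T : E →L[𝕜] E} {p : 𝕜[X]}
    (hp : p.Monic) (hpT : aeval T p = 0) (hsplit : p.Splits) {r : ℝ} (hr : 0 ≤ r)
    (hroots : ∀ z ∈ p.roots, ‖z‖ ≤ r) (hrT : r ≤ ‖T‖) :
    ‖T ^ p.natDegree‖ ≤ (2 ^ p.natDegree - 1) * r * ‖T‖ ^ (p.natDegree - 1) := by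
  refine (norm_pow_natDegree_le_sum hp hpT).trans
    ((Finset.sum_le_sum fun k _ => ?_).trans (sum_range_choose_mul_pow_le hr hrT _))
  have hcoeff := coeff_le_of_roots_le (f := RingHom.id 𝕜) k hp (by simpa using hsplit)
    (by simpa using hroots)
  rw [map_id] at hcoeff
  gcongr

end SpectralBound

/-- `ℂ^d` with `ν` as its norm; a type synonym is needed because `Fin d → ℂ` already carries
the sup norm. -/
def VecWithNorm {d : ℕ} (_ν : (Fin d → ℂ) → ℝ) : Type := Fin d → ℂ

namespace VecWithNorm

variable {d : ℕ} {ν : (Fin d → ℂ) → ℝ}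

instance : AddCommGroup (VecWithNorm ν) := inferInstanceAs (AddCommGroup (Fin d → ℂ))

instance : Module ℂ (VecWithNorm ν) := inferInstanceAs (Module ℂ (Fin d → ℂ))

instance : FiniteDimensional ℂ (VecWithNorm ν) :=
  inferInstanceAs (FiniteDimensional ℂ (Fin d → ℂ))

instance : Norm (VecWithNorm ν) := ⟨ν⟩

theorem normedSpaceCore [hν : Fact (IsNorm d ν)] : NormedSpace.Core ℂ (VecWithNorm ν) where
  norm_nonneg := hν.out.nonneg
  norm_smul := hν.out.homog
  norm_triangle := hν.out.triangle
  norm_eq_zero_iff := hν.out.eq_zero_iff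

noncomputable instance [Fact (IsNorm d ν)] : NormedAddCommGroup (VecWithNorm ν) :=
  NormedAddCommGroup.ofCore normedSpaceCore

noncomputable instance [Fact (IsNorm d ν)] : NormedSpace ℂ (VecWithNorm ν) :=
  NormedSpace.ofCore normedSpaceCore

end VecWithNorm

noncomputable def Matrix.toVecWithNormCLM {d : ℕ} (ν : (Fin d → ℂ) → ℝ) [Fact (IsNorm d ν)] :
    Matrix (Fin d) (Fin d) ℂ ≃ₐ[ℂ] (VecWithNorm ν →L[ℂ] VecWithNorm ν) :=
  Matrix.toLinAlgEquiv'.trans (Module.End.toContinuousLinearMap (VecWithNorm ν))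

theorem opNorm_eq_norm_toVecWithNormCLM {d : ℕ} (ν : (Fin d → ℂ) → ℝ) [Fact (IsNorm d ν)]
    (M : Matrix (Fin d) (Fin d) ℂ) : opNorm ν M = ‖Matrix.toVecWithNormCLM ν M‖ := by
  rw [ContinuousLinearMap.norm_def]
  rfl

theorem specRad_nonneg {d : ℕ} (A : Matrix (Fin d) (Fin d) ℂ) : 0 ≤ specRad A :=
  Real.sSup_nonneg fun _ ⟨μ, _, hr⟩ => hr ▸ norm_nonneg μ

theorem norm_le_specRad {d : ℕ} {A : Matrix (Fin d) (Fin d) ℂ} {μ : ℂ} (hμ : μ ∈ spectrum ℂ A) :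
    ‖μ‖ ≤ specRad A := by
  refine le_csSup ?_ ⟨μ, hμ, rfl⟩
  refine (A.finite_spectrum.image norm).bddAbove.mono ?_
  rintro _ ⟨μ, hμ, rfl⟩
  exact ⟨μ, hμ, rfl⟩

theorem specRad_le_opNorm {d : ℕ} {ν : (Fin d → ℂ) → ℝ} (hν : IsNorm d ν)
    (A : Matrix (Fin d) (Fin d) ℂ) : specRad A ≤ opNorm ν A := by
  have : Fact (IsNorm d ν) := ⟨hν⟩
  rw [opNorm_eq_norm_toVecWithNormCLM]
  refine Real.sSup_le (fun _ ⟨μ, hμ, hr⟩ => hr ▸ ?_) (norm_nonneg _)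
  rw [← AlgEquiv.spectrum_eq (Matrix.toVecWithNormCLM ν)] at hμ
  -- not `spectrum.norm_le_norm_of_mem`: for `d = 0` the operator algebra has `‖1‖ = 0`
  exact (spectrum.norm_le_norm_mul_of_mem hμ).trans
    (mul_le_of_le_one_right (norm_nonneg _) ContinuousLinearMap.norm_id_le)

theorem bochi_inequality_single_matrix_general
    (d : ℕ)
    (A : Matrix (Fin d) (Fin d) ℂ)
    (ν : (Fin d → ℂ) → ℝ) (hν : IsNorm d ν) :
    opNorm ν (A ^ d) ≤ ((2 : ℝ) ^ d - 1) * specRad A * opNorm ν A ^ (d - 1) := by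
  have : Fact (IsNorm d ν) := ⟨hν⟩
  have hdeg : A.charpoly.natDegree = d := by
    rw [Matrix.charpoly_natDegree_eq_dim, Fintype.card_fin]
  have hA : aeval (Matrix.toVecWithNormCLM ν A) A.charpoly = 0 := by
    rw [aeval_algHom_apply, Matrix.aeval_self_charpoly, map_zero]
  have hbound := ContinuousLinearMap.norm_pow_natDegree_le A.charpoly_monic hA
    (IsAlgClosed.splits _) (specRad_nonneg A)
    (fun z hz => norm_le_specRad (A.mem_spectrum_of_isRoot_charpoly (isRoot_of_mem_roots hz)))
    ((specRad_le_opNorm hν A).trans_eq (opNorm_eq_norm_toVecWithNormCLM ν A))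
  rwa [hdeg, ← map_pow, ← opNorm_eq_norm_toVecWithNormCLM,
    ← opNorm_eq_norm_toVecWithNormCLM] at hbound

/-- Bochi's inequality for a single matrix with constant `2^d - 1`:
`‖A^d‖ ≤ (2^d - 1) · ρ(A) · ‖A‖^{d-1}`. -/
theorem bochi_inequality_single_matrix
    (d : ℕ) (hd : 1 ≤ d)
    (A : Matrix (Fin d) (Fin d) ℂ)
    (ν : (Fin d → ℂ) → ℝ) (hν : IsNorm d ν) :
    opNorm ν (A ^ d) ≤ ((2 : ℝ) ^ d - 1) * specRad A * opNorm ν A ^ (d - 1) :=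
  bochi_inequality_single_matrix_general d A ν hν
end

section
/- Let d ≥ 3 and let n ≥ 1 be an integer with base-d representation n = Σ_{j=0}^{k} n_j d^j, where 0 ≤ n_j ≤ d−1 and n_k ≥ 1. Then Σ_{j=0}^{k} n_j Σ_{i=0}^{j} (d−1)^i ≤ ((d−1)^3/(d−2)^2) · n^{ln(d−1)/ln d} and Σ_{j=0}^{k} n_j (d−1)^j ≤ ((d−1)^2/(d−2)) · n^{ln(d−1)/ln d}. -/
/-!
Write `E = d - 1`. A digit is at most `E`, so both digit sums are dominated by geometric sums
in `E` and hence by a constant times `E ^ k`, the largest power occurring. Since `n ≥ d ^ k`,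
raising to the exponent `log E / log d = log_d E` gives `E ^ k = (d ^ k) ^ log_d E ≤ n ^ log_d E`.
-/

open Finset

theorem geom_sum_le_pow_div_sub_one {E : ℝ} (hE : 1 < E) (m : ℕ) :
    ∑ i ∈ range m, E ^ i ≤ E ^ m / (E - 1) := by
  rw [geom_sum_eq hE.ne']
  gcongr
  linarith

theorem sum_range_mul_pow_le {E : ℝ} (hE : 1 < E) {a : ℕ → ℝ} {m : ℕ}
    (ha : ∀ j ∈ range m, a j ≤ E) :
    ∑ j ∈ range m, a j * E ^ j ≤ E / (E - 1) * E ^ m :=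
  calc ∑ j ∈ range m, a j * E ^ j
      ≤ ∑ j ∈ range m, E * E ^ j :=
        sum_le_sum fun j hj => mul_le_mul_of_nonneg_right (ha j hj) (by positivity)
    _ = E * ∑ j ∈ range m, E ^ j := (mul_sum ..).symm
    _ ≤ E * (E ^ m / (E - 1)) :=
        mul_le_mul_of_nonneg_left (geom_sum_le_pow_div_sub_one hE m) (by linarith)
    _ = E / (E - 1) * E ^ m := by ring

theorem sum_range_mul_geom_sum_le {E : ℝ} (hE : 1 < E) {a : ℕ → ℝ} {m : ℕ}
    (ha₀ : ∀ j ∈ range m, 0 ≤ a j) (ha : ∀ j ∈ range m, a j ≤ E) :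
    ∑ j ∈ range m, a j * ∑ i ∈ range (j + 1), E ^ i ≤ E ^ 2 / (E - 1) ^ 2 * E ^ m :=
  calc ∑ j ∈ range m, a j * ∑ i ∈ range (j + 1), E ^ i
      ≤ ∑ j ∈ range m, E / (E - 1) * (a j * E ^ j) := by
        refine sum_le_sum fun j hj => ?_
        calc a j * ∑ i ∈ range (j + 1), E ^ i ≤ a j * (E ^ (j + 1) / (E - 1)) :=
              mul_le_mul_of_nonneg_left (geom_sum_le_pow_div_sub_one hE _) (ha₀ j hj)
          _ = E / (E - 1) * (a j * E ^ j) := by ring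
    _ = E / (E - 1) * ∑ j ∈ range m, a j * E ^ j := (mul_sum ..).symm
    _ ≤ E / (E - 1) * (E / (E - 1) * E ^ m) := by
        gcongr
        exact sum_range_mul_pow_le hE ha
    _ = E ^ 2 / (E - 1) ^ 2 * E ^ m := by rw [← div_pow]; ring

theorem pow_le_sum_range_succ_mul_pow {d k : ℕ} {a : ℕ → ℕ} (h : 1 ≤ a k) :
    d ^ k ≤ ∑ j ∈ range (k + 1), a j * d ^ j :=
  calc d ^ k ≤ a k * d ^ k := Nat.le_mul_of_pos_left _ h
    _ ≤ ∑ j ∈ range (k + 1), a j * d ^ j :=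
      single_le_sum (f := fun j => a j * d ^ j) (fun _ _ => Nat.zero_le _) (self_mem_range_succ k)

theorem pow_le_rpow_log_div_log {d b x : ℝ} (hd : 1 < d) (hb : 1 ≤ b) {k : ℕ}
    (h : d ^ k ≤ x) : b ^ k ≤ x ^ (Real.log b / Real.log d) :=
  calc b ^ k = (d ^ Real.logb d b) ^ k := by rw [Real.rpow_logb (by linarith) hd.ne' (by linarith)]
    _ = (d ^ k) ^ Real.logb d b := Real.rpow_pow_comm (by linarith) _ _
    _ ≤ x ^ (Real.log b / Real.log d) :=
      Real.rpow_le_rpow (by positivity) h (Real.logb_nonneg hd hb)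

theorem base_d_digit_sums_bound_general
    (d : ℕ) (hd : 3 ≤ d)
    (n k : ℕ) (dig : ℕ → ℕ)
    (h_rep : n = ∑ j ∈ Finset.range (k + 1), dig j * d ^ j)
    (h_dig : ∀ j ≤ k, dig j ≤ d - 1)
    (h_lead : 1 ≤ dig k) :
    ((∑ j ∈ Finset.range (k + 1), dig j * ∑ i ∈ Finset.range (j + 1), (d - 1) ^ i : ℕ) : ℝ) ≤
        ((d - 1 : ℝ) ^ 3 / (d - 2 : ℝ) ^ 2) * (n : ℝ) ^ (Real.log (d - 1) / Real.log d)
      ∧ ((∑ j ∈ Finset.range (k + 1), dig j * (d - 1) ^ j : ℕ) : ℝ) ≤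
        ((d - 1 : ℝ) ^ 2 / (d - 2 : ℝ)) * (n : ℝ) ^ (Real.log (d - 1) / Real.log d) := by
  have hdR : (3 : ℝ) ≤ d := by exact_mod_cast hd
  have hE : (1 : ℝ) < d - 1 := by linarith
  have hd₂ : (d - 2 : ℝ) = (d - 1 : ℝ) - 1 := by ring
  have hdig : ∀ j ∈ range (k + 1), (dig j : ℝ) ≤ d - 1 := fun j hj => by
    have := h_dig j (Nat.lt_succ_iff.mp (mem_range.mp hj))
    rw [← Nat.cast_one, ← Nat.cast_sub (by omega)]
    exact_mod_cast this
  have hpow : ((d : ℝ) - 1) ^ k ≤ (n : ℝ) ^ (Real.log (d - 1) / Real.log d) :=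
    pow_le_rpow_log_div_log (by linarith) hE.le
      (by exact_mod_cast h_rep ▸ pow_le_sum_range_succ_mul_pow h_lead)
  push_cast [Nat.cast_sub (by omega : 1 ≤ d)]
  rw [hd₂]
  set E : ℝ := d - 1
  constructor
  · calc _ ≤ E ^ 2 / (E - 1) ^ 2 * E ^ (k + 1) :=
          sum_range_mul_geom_sum_le hE (fun _ _ => by positivity) hdig
      _ = E ^ 3 / (E - 1) ^ 2 * E ^ k := by ring
      _ ≤ _ := by gcongr
  · calc _ ≤ E / (E - 1) * E ^ (k + 1) := sum_range_mul_pow_le hE hdig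
      _ = E ^ 2 / (E - 1) * E ^ k := by ring
      _ ≤ _ := by gcongr

/-- If `d ≥ 3` and `n = Σ_{j≤k} n_j d^j` is the base-`d` representation of `n ≥ 1`
(digits `0 ≤ n_j ≤ d-1`, leading digit `n_k ≥ 1`), then
`Σ_j n_j Σ_{i≤j} (d-1)^i ≤ ((d-1)³/(d-2)²)·n^{ln(d-1)/ln d}` and
`Σ_j n_j (d-1)^j ≤ ((d-1)²/(d-2))·n^{ln(d-1)/ln d}`. -/
theorem base_d_digit_sums_bound
    (d : ℕ) (hd : 3 ≤ d)
    (n k : ℕ) (hn : 1 ≤ n) (dig : ℕ → ℕ)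
    (h_rep : n = ∑ j ∈ Finset.range (k + 1), dig j * d ^ j)
    (h_dig : ∀ j ≤ k, dig j ≤ d - 1)
    (h_lead : 1 ≤ dig k) :
    ((∑ j ∈ Finset.range (k + 1), dig j * ∑ i ∈ Finset.range (j + 1), (d - 1) ^ i : ℕ) : ℝ) ≤
        ((d - 1 : ℝ) ^ 3 / (d - 2 : ℝ) ^ 2) * (n : ℝ) ^ (Real.log (d - 1) / Real.log d)
      ∧ ((∑ j ∈ Finset.range (k + 1), dig j * (d - 1) ^ j : ℕ) : ℝ) ≤
        ((d - 1 : ℝ) ^ 2 / (d - 2 : ℝ)) * (n : ℝ) ^ (Real.log (d - 1) / Real.log d) :=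
  base_d_digit_sums_bound_general d hd n k dig h_rep h_dig h_lead
end

section
/- Let d ≥ 1, let 𝒜 be a nonempty bounded set of complex d×d matrices, let ‖·‖_e denote the operator norm on matrices induced by the Euclidean norm on ℂ^d, and let S be an invertible complex d×d matrix. Then ‖S 𝒜^d S^{-1}‖_e ≤ d^d · ‖𝒜‖_e · ‖S 𝒜 S^{-1}‖_e^{d-1}, where S 𝒜^n S^{-1} = {S B S^{-1} : B ∈ 𝒜^n} and the norm of a set of matrices is the supremum of the norms of its elements. -/
open scoped Pointwise

/-- The Euclidean norm on `ℂ^d`. -/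
noncomputable def euclNorm (d : ℕ) (v : Fin d → ℂ) : ℝ :=
  Real.sqrt (∑ i, ‖v i‖ ^ 2)

/-
Write `S = U D V*` with `U`, `V` unitary and `D = diag s` positive (singular value decomposition).
Unitary conjugation preserves the Euclidean operator norm, so `S 𝒜 S⁻¹` may be replaced by
`D 𝒜' D⁻¹` with `𝒜' = V* 𝒜 V`, which has the same norm as `𝒜`. An entry `(i, j)` of
`D A₁ ⋯ A_d D⁻¹` is a sum over the `d ^ (d - 1)` walks `i = q₀, q₁, …, q_d = j` of the products
`∏ₖ (s_{q_{k-1}} / s_{q_k}) (Aₖ)_{q_{k-1} q_k}`. A walk of `d` steps through `d` indices revisits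
some index, and along the closed sub-walk between the two visits the ratios of the `s`'s telescope
to `1`. Bounding the entries of `Aₖ` there by `‖𝒜‖` and every other factor, an entry of
`D Aₖ D⁻¹`, by `‖S 𝒜 S⁻¹‖`, each walk contributes at most `‖𝒜‖ ‖S 𝒜 S⁻¹‖ ^ (d - 1)` (when
`‖𝒜‖ ≤ ‖S 𝒜 S⁻¹‖`; otherwise submultiplicativity already gives the bound). Finally a `d × d`
matrix with entries at most `K` has norm at most `d K`.
-/

open Finset Matrix
open scoped ComplexOrder Matrix.Norms.L2Operator

theorem Finset.prod_le_pow_card_of_nonneg {ι R : Type*} [CommSemiring R] [PartialOrder R]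
    [IsOrderedRing R] {s : Finset ι} {f : ι → R} {b : R} (h₀ : ∀ i ∈ s, 0 ≤ f i)
    (h : ∀ i ∈ s, f i ≤ b) : ∏ i ∈ s, f i ≤ b ^ #s :=
  (prod_le_prod h₀ h).trans_eq (prod_const b)

theorem Finset.prod_Ico_div_succ_of_ne_zero {G₀ : Type*} [CommGroupWithZero G₀] {f : ℕ → G₀}
    (hf : ∀ k, f k ≠ 0) {u v : ℕ} (huv : u ≤ v) :
    ∏ k ∈ Ico u v, f k / f (k + 1) = f u / f v := by
  induction v, huv using Nat.le_induction with
  | base => simp [div_self (hf u)]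
  | succ v huv ih => rw [prod_Ico_succ_top huv, ih, div_mul_div_cancel₀ (hf v)]

section WalkWeights

variable {ι : Type*} {r : ι → ℝ} {α β : ℝ}

theorem prod_div_mul_le_of_apply_eq (hr : ∀ i, 0 < r i) {m : ℕ} {w : ℕ → ι} {a : ℕ → ℝ}
    (ha₀ : ∀ t < m, 0 ≤ a t) (ha : ∀ t < m, a t ≤ α)
    (hβ : ∀ t < m, r (w t) / r (w (t + 1)) * a t ≤ β) (hαβ : α ≤ β)
    {u v : ℕ} (huv : u < v) (hvm : v ≤ m) (hw : w u = w v) :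
    ∏ t ∈ range m, r (w t) / r (w (t + 1)) * a t ≤ α * β ^ (m - 1) := by
  have hα : 0 ≤ α := (ha₀ u (by omega)).trans (ha u (by omega))
  have hβ₀ : 0 ≤ β := hα.trans hαβ
  have hloop : Ico u v ⊆ range m := fun t ht => mem_range.mpr ((mem_Ico.mp ht).2.trans_le hvm)
  have hloop_eq : ∏ t ∈ Ico u v, r (w t) / r (w (t + 1)) * a t = ∏ t ∈ Ico u v, a t := by
    rw [prod_mul_distrib, prod_Ico_div_succ_of_ne_zero (fun t => (hr (w t)).ne') huv.le, hw,
      div_self (hr _).ne', one_mul]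
  have hout : ∏ t ∈ range m \ Ico u v, r (w t) / r (w (t + 1)) * a t ≤ β ^ (m - (v - u)) := by
    have := prod_le_pow_card_of_nonneg (s := range m \ Ico u v)
      (fun t ht => mul_nonneg (div_nonneg (hr _).le (hr _).le)
        (ha₀ t (mem_range.mp (mem_sdiff.mp ht).1)))
      (fun t ht => hβ t (mem_range.mp (mem_sdiff.mp ht).1))
    rwa [card_sdiff_of_subset hloop, card_range, Nat.card_Ico] at this
  have hin : ∏ t ∈ Ico u v, a t ≤ α * β ^ (v - u - 1) :=
    calc ∏ t ∈ Ico u v, a t ≤ α ^ (v - u) := by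
          simpa using prod_le_pow_card_of_nonneg (s := Ico u v)
            (fun t ht => ha₀ t (mem_range.mp (hloop ht)))
            (fun t ht => ha t (mem_range.mp (hloop ht)))
      _ = α * α ^ (v - u - 1) := by rw [← pow_succ', Nat.sub_add_cancel (by omega)]
      _ ≤ α * β ^ (v - u - 1) := by gcongr
  rw [← prod_sdiff hloop, hloop_eq]
  calc _ ≤ β ^ (m - (v - u)) * (α * β ^ (v - u - 1)) := by
        gcongr
        exact prod_nonneg fun t ht => ha₀ t (mem_range.mp (hloop ht))
    _ = α * β ^ (m - 1) := by
        rw [mul_left_comm, ← pow_add]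
        congr 2
        omega

open Fin.NatCast in
theorem prod_div_mul_le_of_card_le [Fintype ι] (hr : ∀ i, 0 < r i) {m : ℕ}
    (hm : Fintype.card ι ≤ m) (w : Fin (m + 1) → ι) {a : Fin m → ℝ} (ha₀ : ∀ k, 0 ≤ a k)
    (ha : ∀ k, a k ≤ α) (hβ : ∀ k, r (w k.castSucc) / r (w k.succ) * a k ≤ β) :
    ∏ k, r (w k.castSucc) / r (w k.succ) * a k ≤ α * β ^ (m - 1) := by
  obtain ⟨p, rfl⟩ := Nat.exists_eq_add_one_of_ne_zero
    ((Fintype.card_pos_iff.mpr ⟨w 0⟩).trans_le hm).ne'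
  rcases le_total α β with hαβ | hβα
  · obtain ⟨x, y, hxy, hw⟩ := Fintype.exists_ne_map_eq_of_card_lt w
      (by rw [Fintype.card_fin]; omega)
    wlog hlt : x < y generalizing x y
    · exact this y x hxy.symm hw.symm (hxy.symm.lt_of_le (not_lt.mp hlt))
    have hrange : ∏ k, r (w k.castSucc) / r (w k.succ) * a k =
        ∏ t ∈ range (p + 1), r (w t) / r (w (t + 1 : ℕ)) * a t := by
      rw [← Fin.prod_univ_eq_prod_range]
      simp [Fin.cast_val_eq_self, Fin.coe_eq_castSucc]
    rw [hrange]
    refine prod_div_mul_le_of_apply_eq hr (fun t _ => ha₀ _) (fun t _ => ha _) (fun t ht => ?_)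
      hαβ hlt y.is_le (by simpa [Fin.cast_val_eq_self] using hw)
    obtain ⟨k, rfl⟩ : ∃ k : Fin (p + 1), (k : ℕ) = t := ⟨⟨t, ht⟩, rfl⟩
    simpa [Fin.cast_val_eq_self, Fin.coe_eq_castSucc] using hβ k
  · have hβ₀ : 0 ≤ β := (mul_nonneg (div_nonneg (hr _).le (hr _).le) (ha₀ 0)).trans (hβ 0)
    calc ∏ k, r (w k.castSucc) / r (w k.succ) * a k ≤ β ^ (p + 1) := by
          simpa using prod_le_pow_card_of_nonneg (s := univ)
            (fun k _ => mul_nonneg (div_nonneg (hr _).le (hr _).le) (ha₀ k)) (fun k _ => hβ k)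
      _ = β * β ^ (p + 1 - 1) := by rw [pow_succ', Nat.add_sub_cancel]
      _ ≤ α * β ^ (p + 1 - 1) := by gcongr

end WalkWeights

theorem CStarRing.norm_mem_unitary_mul_mul_star {E : Type*} [NormedRing E] [StarRing E]
    [CStarRing E] {U : E} (A : E) (hU : U ∈ unitary E) : ‖U * A * star U‖ = ‖A‖ := by
  rw [norm_mul_mem_unitary _ (Unitary.star_mem hU), norm_mem_unitary_mul _ hU]

namespace Matrix

section Walks

variable {n : Type*}

def walk {p : ℕ} (i j : n) (q : Fin p → n) : Fin (p + 2) → n := Fin.cons i (Fin.snoc q j)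

theorem walk_zero {p : ℕ} (i j : n) (q : Fin p → n) : walk i j q 0 = i := rfl

theorem walk_cons {p : ℕ} (i j l : n) (q : Fin p → n) :
    walk i j (Fin.cons l q) = Fin.cons i (walk l j q) := by
  simp [walk, Fin.cons_snoc_eq_snoc_cons]

theorem list_prod_ofFn_apply {R : Type*} [Fintype n] [DecidableEq n] [CommSemiring R] {p : ℕ}
    (X : Fin (p + 1) → Matrix n n R) (i j : n) :
    (List.ofFn X).prod i j =
      ∑ q : Fin p → n, ∏ k, X k (walk i j q k.castSucc) (walk i j q k.succ) := by
  induction p generalizing i with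
  | zero => simp [walk, Fin.snoc]
  | succ p ih =>
    rw [List.ofFn_succ, List.prod_cons, mul_apply,
      ← (Fin.consEquiv fun _ => n).sum_comp, Fintype.sum_prod_type]
    refine sum_congr rfl fun l _ => ?_
    rw [ih, mul_sum]
    refine sum_congr rfl fun q _ => ?_
    rw [Fin.prod_univ_succ (n := p + 1)]
    simp only [Fin.consEquiv, Equiv.coe_fn_mk, walk_cons, walk_zero, Fin.castSucc_zero,
      Fin.cons_succ, ← Fin.succ_castSucc]

end Walks

section L2OpNorm

variable {𝕜 l n : Type*} [RCLike 𝕜] [Fintype l] [Fintype n] [DecidableEq n]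

theorem norm_apply_le_l2_opNorm (A : Matrix l n 𝕜) (i : l) (j : n) : ‖A i j‖ ≤ ‖A‖ := by
  simpa [EuclideanSpace.norm_eq, mulVec_single] using
    (PiLp.norm_apply_le _ i).trans (A.l2_opNorm_mulVec (WithLp.toLp 2 (Pi.single j 1)))

theorem l2_opNorm_le_sqrt_sum_sq (A : Matrix l n 𝕜) : ‖A‖ ≤ √(∑ i, ∑ j, ‖A i j‖ ^ 2) := by
  refine ContinuousLinearMap.opNorm_le_bound _ (Real.sqrt_nonneg _) fun x => ?_
  rw [← Real.sqrt_sq (norm_nonneg x), ← Real.sqrt_mul (by positivity), EuclideanSpace.norm_eq,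
    EuclideanSpace.norm_eq, Real.sq_sqrt (by positivity), sum_mul]
  refine Real.sqrt_le_sqrt (sum_le_sum fun i _ => ?_)
  have hrow : ‖(A *ᵥ x.ofLp) i‖ ≤ ∑ j, ‖A i j‖ * ‖x.ofLp j‖ := by
    simp only [mulVec, dotProduct, ← norm_mul]
    exact norm_sum_le _ _
  calc _ = ‖(A *ᵥ x.ofLp) i‖ ^ 2 := rfl
    _ ≤ (∑ j, ‖A i j‖ * ‖x.ofLp j‖) ^ 2 := by gcongr
    _ ≤ (∑ j, ‖A i j‖ ^ 2) * ∑ j, ‖x j‖ ^ 2 := sum_mul_sq_le_sq_mul_sq _ _ _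

theorem l2_opNorm_le_card_mul {A : Matrix n n 𝕜} {K : ℝ} (hK : 0 ≤ K) (h : ∀ i j, ‖A i j‖ ≤ K) :
    ‖A‖ ≤ Fintype.card n * K := by
  refine A.l2_opNorm_le_sqrt_sum_sq.trans (Real.sqrt_le_iff.mpr ⟨by positivity, ?_⟩)
  calc ∑ i, ∑ j, ‖A i j‖ ^ 2 ≤ ∑ _i : n, ∑ _j : n, K ^ 2 := by gcongr with i _ j; exact h i j
    _ = _ := by simp only [sum_const, card_univ, nsmul_eq_mul]; ring

theorem diagonal_ofReal_mul_diagonal_inv {s : n → ℝ} (hs : ∀ i, s i ≠ 0) :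
    diagonal (fun i => (s i : 𝕜)) * diagonal (fun i => ((s i)⁻¹ : 𝕜)) = 1 := by
  rw [diagonal_mul_diagonal, ← diagonal_one]
  congr 1
  ext i
  exact mul_inv_cancel₀ (RCLike.ofReal_ne_zero.mpr (hs i))

theorem exists_eq_unitary_mul_diagonal_mul_star {S : Matrix n n 𝕜} (hS : IsUnit S) :
    ∃ U ∈ unitaryGroup n 𝕜, ∃ V ∈ unitaryGroup n 𝕜, ∃ s : n → ℝ, (∀ i, 0 < s i) ∧
      S = U * diagonal (fun i => (s i : 𝕜)) * star V := by
  have hH : (Sᴴ * S).PosDef := .conjTranspose_mul_self S (mulVec_injective_iff_isUnit.mpr hS)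
  set V : Matrix n n 𝕜 := (hH.isHermitian.eigenvectorUnitary : Matrix n n 𝕜)
  have hV : V ∈ unitaryGroup n 𝕜 := hH.isHermitian.eigenvectorUnitary.2
  set s := fun i => √(hH.isHermitian.eigenvalues i)
  have hs : ∀ i, 0 < s i := fun i => Real.sqrt_pos.mpr (hH.eigenvalues_pos i)
  set D := diagonal (fun i => (s i : 𝕜))
  set D' := diagonal (fun i => ((s i)⁻¹ : 𝕜))
  have hDD' : D * D' = 1 := diagonal_ofReal_mul_diagonal_inv fun i => (hs i).ne'
  have hD'D : D' * D = 1 := mul_eq_one_comm.mp hDD'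
  have hdiag : star V * (Sᴴ * S) * V = D * D := by
    have := hH.isHermitian.conjStarAlgAut_star_eigenvectorUnitary
    rw [Unitary.conjStarAlgAut_apply, Unitary.coe_star, star_star] at this
    rw [this, diagonal_mul_diagonal]
    congr 1
    ext i
    simp [s, ← RCLike.ofReal_mul, Real.mul_self_sqrt (hH.eigenvalues_pos i).le]
  refine ⟨S * V * D', ?_, V, hV, s, hs, ?_⟩
  · have hD' : star D' = D' := by simp [D', star_eq_conjTranspose, diagonal_conjTranspose]
    rw [mem_unitaryGroup_iff']
    calc star (S * V * D') * (S * V * D') = star D' * (star V * (Sᴴ * S) * V) * D' := by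
          simp only [star_mul, star_eq_conjTranspose, Matrix.mul_assoc]
      _ = 1 := by rw [hD', hdiag, ← mul_assoc, hD'D, one_mul, hDD']
  · rw [mul_assoc (S * V), hD'D, mul_one, mul_assoc, Unitary.mul_star_self_of_mem hV, mul_one]

theorem norm_list_prod_le_of_eq_diagonal_conj [Nonempty n] {m : ℕ} (hm : Fintype.card n ≤ m)
    {s : n → ℝ} (hs : ∀ i, 0 < s i) {A X : Fin m → Matrix n n 𝕜} {α β : ℝ}
    (hX : ∀ k, X k = diagonal (fun i => (s i : 𝕜)) * A k * diagonal (fun i => ((s i)⁻¹ : 𝕜)))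
    (hA : ∀ k, ‖A k‖ ≤ α) (hXβ : ∀ k, ‖X k‖ ≤ β) :
    ‖(List.ofFn X).prod‖ ≤ Fintype.card n ^ m * α * β ^ (m - 1) := by
  obtain ⟨p, rfl⟩ := Nat.exists_eq_add_one_of_ne_zero (Fintype.card_pos.trans_le hm).ne'
  have hX_apply : ∀ k a b, ‖X k a b‖ = s a / s b * ‖A k a b‖ := by
    intro k a b
    rw [hX, mul_diagonal, diagonal_mul, norm_mul, norm_mul, norm_inv, RCLike.norm_ofReal,
      RCLike.norm_ofReal, abs_of_pos (hs a), abs_of_pos (hs b)]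
    ring
  have hwalk : ∀ w : Fin (p + 2) → n, ∏ k, ‖X k (w k.castSucc) (w k.succ)‖ ≤ α * β ^ p := by
    intro w
    simp only [hX_apply]
    simpa using prod_div_mul_le_of_card_le hs hm w (fun k => norm_nonneg _)
      (fun k => (norm_apply_le_l2_opNorm _ _ _).trans (hA k))
      (fun k => hX_apply k _ _ ▸ (norm_apply_le_l2_opNorm _ _ _).trans (hXβ k))
  have hK : 0 ≤ α * β ^ p :=
    (prod_nonneg fun _ _ => norm_nonneg _).trans (hwalk fun _ => Classical.arbitrary n)
  have hentry : ∀ i j, ‖(List.ofFn X).prod i j‖ ≤ Fintype.card n ^ p * (α * β ^ p) := by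
    intro i j
    rw [list_prod_ofFn_apply]
    calc _ ≤ ∑ q : Fin p → n, ‖∏ k, X k (walk i j q k.castSucc) (walk i j q k.succ)‖ :=
          norm_sum_le _ _
      _ ≤ ∑ _q : Fin p → n, α * β ^ p := by
          gcongr with q
          rw [norm_prod]
          exact hwalk _
      _ = _ := by simp
  calc _ ≤ Fintype.card n * (Fintype.card n ^ p * (α * β ^ p)) :=
        l2_opNorm_le_card_mul (by positivity) hentry
    _ = _ := by rw [Nat.add_sub_cancel, pow_succ']; ring

theorem norm_conj_list_prod_le [Nonempty n] {m : ℕ} (hm : Fintype.card n ≤ m)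
    {S : Matrix n n 𝕜} (hS : IsUnit S) {A : Fin m → Matrix n n 𝕜} {α β : ℝ}
    (hA : ∀ k, ‖A k‖ ≤ α) (hSA : ∀ k, ‖S * A k * S⁻¹‖ ≤ β) :
    ‖S * (List.ofFn A).prod * S⁻¹‖ ≤ Fintype.card n ^ m * α * β ^ (m - 1) := by
  obtain ⟨U, hU, V, hV, s, hs, rfl⟩ := exists_eq_unitary_mul_diagonal_mul_star hS
  set D := diagonal (fun i => (s i : 𝕜))
  set D' := diagonal (fun i => ((s i)⁻¹ : 𝕜))
  have hT : D * star V * (V * D') = 1 := by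
    rw [mul_assoc, ← mul_assoc (star V), Unitary.star_mul_self_of_mem hV, one_mul,
      diagonal_ofReal_mul_diagonal_inv fun i => (hs i).ne']
  have hS_inv : (U * D * star V)⁻¹ = V * D' * star U :=
    inv_eq_right_inv <| by
      calc _ = U * (D * star V * (V * D')) * star U := by simp only [mul_assoc]
        _ = 1 := by rw [hT, mul_one, Unitary.mul_star_self_of_mem hU]
  have hconj (B : Matrix n n 𝕜) :
      ‖U * D * star V * B * (U * D * star V)⁻¹‖ = ‖D * (star V * B * V) * D'‖ := by
    rw [hS_inv, ← CStarRing.norm_mem_unitary_mul_mul_star (D * (star V * B * V) * D') hU]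
    simp only [mul_assoc]
  let T : (Matrix n n 𝕜)ˣ := ⟨D * star V, V * D', hT, mul_eq_one_comm.mp hT⟩
  have hprod : D * (star V * (List.ofFn A).prod * V) * D' =
      (List.ofFn fun k => D * (star V * A k * V) * D').prod := by
    simpa [T, mul_assoc, ConjAct.units_smul_def, List.map_ofFn, Function.comp_def] using
      List.smul_prod' (r := ConjAct.toConjAct T) (l := List.ofFn A)
  rw [hconj, hprod]
  refine norm_list_prod_le_of_eq_diagonal_conj hm hs (fun k => rfl) (fun k => ?_)
    (fun k => by simpa [hconj] using hSA k)
  simpa using (CStarRing.norm_mem_unitary_mul_mul_star (A k) (Unitary.star_mem hV)).trans_le (hA k)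

end L2OpNorm

end Matrix

theorem opNorm_euclNorm (d : ℕ) : opNorm (euclNorm d) = (‖·‖) := by
  ext A
  rw [← l2_opNorm_toEuclideanCLM, ContinuousLinearMap.norm_def, opNorm]
  congr 1
  ext c
  refine and_congr_right fun _ => ⟨fun h x => ?_, fun h v => ?_⟩
  · simpa [euclNorm, EuclideanSpace.norm_eq] using h x.ofLp
  · simpa [euclNorm, EuclideanSpace.norm_eq] using h (WithLp.toLp 2 v)

theorem euclidean_conjugated_power_bound_general
    (d : ℕ) (hd : 1 ≤ d)
    (𝒜 : Set (Matrix (Fin d) (Fin d) ℂ))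
    (h_bdd : ∃ M : ℝ, ∀ A ∈ 𝒜, opNorm (euclNorm d) A ≤ M)
    (S : Matrix (Fin d) (Fin d) ℂ) (hS : IsUnit S) :
    setNorm (euclNorm d) ((fun B => S * B * S⁻¹) '' (𝒜 ^ d)) ≤
      (d : ℝ) ^ d * setNorm (euclNorm d) 𝒜 *
        setNorm (euclNorm d) ((fun B => S * B * S⁻¹) '' 𝒜) ^ (d - 1) := by
  have : Nonempty (Fin d) := ⟨⟨0, hd⟩⟩
  obtain ⟨M, hM⟩ := h_bdd
  simp only [setNorm, opNorm_euclNorm] at hM ⊢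
  set α := sSup (norm '' 𝒜)
  set β := sSup (norm '' ((fun B => S * B * S⁻¹) '' 𝒜))
  have hα₀ : 0 ≤ α := Real.sSup_nonneg (Set.forall_mem_image.mpr fun _ _ => norm_nonneg _)
  have hβ₀ : 0 ≤ β := Real.sSup_nonneg (Set.forall_mem_image.mpr fun _ _ => norm_nonneg _)
  have hα : ∀ A ∈ 𝒜, ‖A‖ ≤ α := fun A hA =>
    le_csSup ⟨M, Set.forall_mem_image.mpr hM⟩ (Set.mem_image_of_mem _ hA)
  have hβ : ∀ A ∈ 𝒜, ‖S * A * S⁻¹‖ ≤ β := by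
    refine fun A hA => le_csSup ⟨‖S‖ * M * ‖S⁻¹‖, ?_⟩ ⟨_, ⟨A, hA, rfl⟩, rfl⟩
    rintro _ ⟨_, ⟨A, hA, rfl⟩, rfl⟩
    calc ‖S * A * S⁻¹‖ ≤ ‖S‖ * ‖A‖ * ‖S⁻¹‖ := norm_mul₃_le
      _ ≤ ‖S‖ * M * ‖S⁻¹‖ := by gcongr; exact hM A hA
  refine Real.sSup_le ?_ (by positivity)
  rintro _ ⟨_, ⟨B, hB, rfl⟩, rfl⟩
  obtain ⟨f, rfl⟩ := Set.mem_pow.mp hB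
  simpa using norm_conj_list_prod_le (by simp) hS (fun k => hα _ (f k).2) (fun k => hβ _ (f k).2)

/-- For every bounded nonempty set `𝒜` of `d×d` complex matrices and every invertible `S`:
`‖S 𝒜^d S⁻¹‖_e ≤ d^d · ‖𝒜‖_e · ‖S 𝒜 S⁻¹‖_e^{d-1}`, the norms being Euclidean operator
norms of sets of matrices. -/
theorem euclidean_conjugated_power_bound
    (d : ℕ) (hd : 1 ≤ d)
    (𝒜 : Set (Matrix (Fin d) (Fin d) ℂ)) (h_ne : 𝒜.Nonempty)
    (h_bdd : ∃ M : ℝ, ∀ A ∈ 𝒜, opNorm (euclNorm d) A ≤ M)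
    (S : Matrix (Fin d) (Fin d) ℂ) (hS : IsUnit S) :
    setNorm (euclNorm d) ((fun B => S * B * S⁻¹) '' (𝒜 ^ d)) ≤
      (d : ℝ) ^ d * setNorm (euclNorm d) 𝒜 *
        setNorm (euclNorm d) ((fun B => S * B * S⁻¹) '' 𝒜) ^ (d - 1) :=
  euclidean_conjugated_power_bound_general d hd 𝒜 h_bdd S hS
end

section
/- Let d ≥ 1, let 𝒜 be a nonempty bounded set of complex d×d matrices, let ‖A‖_0 = max_{i,j} |a_{ij}| denote the max-entry matrix norm, and let S be an invertible diagonal complex d×d matrix. Then ‖S 𝒜^d S^{-1}‖_0 ≤ d^{d-1} · ‖𝒜‖_0 · ‖S 𝒜 S^{-1}‖_0^{d-1}, where S 𝒜^n S^{-1} = {S B S^{-1} : B ∈ 𝒜^n} and the norm of a set of matrices is the supremum of the norms of its elements. -/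
/-!
Write `S = diagonal v`, so that `(S B S⁻¹) p q = v p * B p q / v q`. The `(i, j)` entry of a
product of `d` conjugated factors is a sum of `d ^ (d - 1)` terms, one for each index path
`i = k₀, k₁, …, k_d = j`. A path with `d + 1` vertices in `Fin d` cannot strictly decrease `‖v ·‖`
at every step, so some factor of each term sits at a step with `‖v k_{t-1}‖ ≤ ‖v k_t‖`; there the
conjugated entry is at most the unconjugated one, hence at most `‖𝒜‖₀`, while every other factor
is at most `‖S 𝒜 S⁻¹‖₀`. By induction on the number of factors this becomes: if at most `n`
indices have weight strictly below that of `i`, the entries in row `i` of a product of `n + 1`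
factors are at most `d ^ n * ‖𝒜‖₀ * ‖S 𝒜 S⁻¹‖₀ ^ n`.
-/

open scoped Pointwise

/-- The max-entry norm `‖A‖₀ = max_{i,j} |a_{ij}|` of a `d × d` complex matrix. -/
noncomputable def entryNorm {d : ℕ} (A : Matrix (Fin d) (Fin d) ℂ) : ℝ :=
  sSup {r : ℝ | ∃ i j, r = ‖A i j‖}

/-- The max-entry norm of a set of matrices: the supremum of the norms of its elements. -/
noncomputable def entrySetNorm {d : ℕ} (𝒜 : Set (Matrix (Fin d) (Fin d) ℂ)) : ℝ :=
  sSup (entryNorm '' 𝒜)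

open Finset Matrix

lemma Matrix.mul_list_prod_mul_inv {n α : Type*} [Fintype n] [DecidableEq n] [CommRing α]
    {S : Matrix n n α} (hS : IsUnit S) (L : List (Matrix n n α)) :
    S * L.prod * S⁻¹ = (L.map fun B => S * B * S⁻¹).prod := by
  obtain ⟨u, rfl⟩ := hS
  rw [← coe_units_inv]
  exact map_list_prod (MulDistribMulAction.toMonoidHom _ (ConjAct.toConjAct u)) L

section EntryNorm

variable {d : ℕ}

lemma norm_apply_le_entryNorm (A : Matrix (Fin d) (Fin d) ℂ) (i j : Fin d) :
    ‖A i j‖ ≤ entryNorm A := by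
  refine le_csSup ⟨∑ p : Fin d × Fin d, ‖A p.1 p.2‖, ?_⟩ ⟨i, j, rfl⟩
  rintro _ ⟨i, j, rfl⟩
  exact single_le_sum (f := fun p : Fin d × Fin d => ‖A p.1 p.2‖)
    (fun _ _ => norm_nonneg _) (mem_univ (i, j))

lemma entryNorm_nonneg (A : Matrix (Fin d) (Fin d) ℂ) : 0 ≤ entryNorm A :=
  Real.sSup_nonneg (by rintro _ ⟨i, j, rfl⟩; exact norm_nonneg _)

lemma entryNorm_le {A : Matrix (Fin d) (Fin d) ℂ} {c : ℝ} (h : ∀ i j, ‖A i j‖ ≤ c)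
    (hc : 0 ≤ c) : entryNorm A ≤ c :=
  Real.sSup_le (by rintro _ ⟨i, j, rfl⟩; exact h i j) hc

lemma norm_apply_le_entrySetNorm {𝒜 : Set (Matrix (Fin d) (Fin d) ℂ)}
    (h𝒜 : BddAbove (entryNorm '' 𝒜)) {A : Matrix (Fin d) (Fin d) ℂ} (hA : A ∈ 𝒜) (i j : Fin d) :
    ‖A i j‖ ≤ entrySetNorm 𝒜 :=
  (norm_apply_le_entryNorm A i j).trans (le_csSup h𝒜 (Set.mem_image_of_mem _ hA))

lemma entrySetNorm_nonneg (𝒜 : Set (Matrix (Fin d) (Fin d) ℂ)) : 0 ≤ entrySetNorm 𝒜 :=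
  Real.sSup_nonneg (by rintro _ ⟨A, -, rfl⟩; exact entryNorm_nonneg A)

lemma entrySetNorm_le {𝒜 : Set (Matrix (Fin d) (Fin d) ℂ)} {c : ℝ}
    (h : ∀ A ∈ 𝒜, entryNorm A ≤ c) (hc : 0 ≤ c) : entrySetNorm 𝒜 ≤ c :=
  Real.sSup_le (by rintro _ ⟨A, hA, rfl⟩; exact h A hA) hc

end EntryNorm

section DiagonalConj

variable {n K : Type*} [Fintype n] [DecidableEq n] [NormedField K] {v : n → K}

lemma inv_diagonal_of_ne_zero (hv : ∀ i, v i ≠ 0) :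
    (diagonal v)⁻¹ = diagonal fun i => (v i)⁻¹ :=
  inv_eq_right_inv (by rw [diagonal_mul_diagonal, ← diagonal_one]; simp [hv])

lemma diagonal_mul_mul_inv_diagonal_apply (hv : ∀ i, v i ≠ 0) (B : Matrix n n K) (p q : n) :
    (diagonal v * B * (diagonal v)⁻¹) p q = v p * B p q * (v q)⁻¹ := by
  rw [inv_diagonal_of_ne_zero hv, mul_diagonal, diagonal_mul]

lemma norm_diagonal_mul_mul_inv_diagonal_apply_le (hv : ∀ i, v i ≠ 0) (B : Matrix n n K)
    (p q : n) : ‖(diagonal v * B * (diagonal v)⁻¹) p q‖ ≤ ‖v‖ * ‖v⁻¹‖ * ‖B p q‖ := by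
  rw [diagonal_mul_mul_inv_diagonal_apply hv, norm_mul, norm_mul, mul_right_comm]
  gcongr
  · exact norm_le_pi_norm v p
  · exact norm_le_pi_norm v⁻¹ q

lemma norm_diagonal_mul_mul_inv_diagonal_apply_le_of_le (hv : ∀ i, v i ≠ 0)
    (B : Matrix n n K) {p q : n} (hpq : ‖v p‖ ≤ ‖v q‖) :
    ‖(diagonal v * B * (diagonal v)⁻¹) p q‖ ≤ ‖B p q‖ := by
  rw [diagonal_mul_mul_inv_diagonal_apply hv, norm_mul, norm_mul, norm_inv, mul_right_comm,
    ← div_eq_mul_inv]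
  exact mul_le_of_le_one_left (norm_nonneg _)
    (div_le_one_of_le₀ hpq (norm_nonneg _))

end DiagonalConj

lemma bddAbove_entryNorm_diagonal_conj {d : ℕ} {v : Fin d → ℂ} (hv : ∀ i, v i ≠ 0)
    {𝒜 : Set (Matrix (Fin d) (Fin d) ℂ)} (h𝒜 : BddAbove (entryNorm '' 𝒜)) :
    BddAbove (entryNorm '' ((fun B => diagonal v * B * (diagonal v)⁻¹) '' 𝒜)) := by
  obtain ⟨c, hc⟩ := h𝒜
  refine ⟨‖v‖ * ‖v⁻¹‖ * c, ?_⟩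
  rintro _ ⟨_, ⟨A, hA, rfl⟩, rfl⟩
  have hAc : entryNorm A ≤ c := hc ⟨A, hA, rfl⟩
  refine entryNorm_le (fun p q => ?_) (by have := (entryNorm_nonneg A).trans hAc; positivity)
  exact (norm_diagonal_mul_mul_inv_diagonal_apply_le hv A p q).trans
    (by gcongr; exact (norm_apply_le_entryNorm A p q).trans hAc)

section ProductEntries

variable {ι : Type*} [Fintype ι]

lemma card_filter_lt_lt_card_filter_lt {w : ι → ℝ} {i k : ι} (hki : w k < w i) :
    #{q | w q < w k} < #{q | w q < w i} := by
  refine card_lt_card ((ssubset_iff_of_subset ?_).2 ⟨k, by simpa using hki, by simp⟩)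
  intro q
  simp only [mem_filter, mem_univ, true_and]
  exact fun hqk => hqk.trans hki

lemma card_filter_lt_lt_card (w : ι → ℝ) (i : ι) : #{q | w q < w i} < Fintype.card ι :=
  card_lt_univ_of_notMem (x := i) (by simp)

variable {R : Type*} [SeminormedRing R]

lemma norm_mul_apply_le_card_mul {A B : Matrix ι ι R} {i j : ι} {c : ℝ}
    (h : ∀ k, ‖A i k‖ * ‖B k j‖ ≤ c) : ‖(A * B) i j‖ ≤ Fintype.card ι * c :=
  calc ‖(A * B) i j‖ ≤ ∑ k, ‖A i k‖ * ‖B k j‖ :=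
        (norm_sum_le _ _).trans (sum_le_sum fun k _ => norm_mul_le _ _)
    _ ≤ ∑ _k : ι, c := sum_le_sum fun k _ => h k
    _ = Fintype.card ι * c := by simp

variable [DecidableEq ι]

lemma norm_prod_ofFn_apply_le {n : ℕ} {C : Fin (n + 1) → Matrix ι ι R} {M : ℝ}
    (hM : ∀ t p q, ‖C t p q‖ ≤ M) (i j : ι) :
    ‖(List.ofFn C).prod i j‖ ≤ Fintype.card ι ^ n * M ^ (n + 1) := by
  induction n generalizing i with
  | zero => simpa using hM 0 i j
  | succ n ih =>
    have hM₀ : 0 ≤ M := (norm_nonneg _).trans (hM 0 i i)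
    rw [List.ofFn_succ, List.prod_cons]
    refine (norm_mul_apply_le_card_mul fun k =>
      mul_le_mul (hM 0 i k) (ih (fun t => hM t.succ) k) (norm_nonneg _) hM₀).trans_eq ?_
    ring

lemma norm_prod_ofFn_apply_le_of_weight {n : ℕ} {C : Fin (n + 1) → Matrix ι ι R} (w : ι → ℝ)
    {M N : ℝ} (hM : ∀ t p q, ‖C t p q‖ ≤ M) (hN : ∀ t p q, w p ≤ w q → ‖C t p q‖ ≤ N)
    {i : ι} (hi : #{q | w q < w i} ≤ n) (j : ι) :
    ‖(List.ofFn C).prod i j‖ ≤ Fintype.card ι ^ n * N * M ^ n := by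
  induction n generalizing i with
  | zero =>
    have hmin : ∀ q, w i ≤ w q := by simpa [filter_eq_empty_iff] using hi
    simpa using hN 0 i j (hmin j)
  | succ n ih =>
    have hM₀ : 0 ≤ M := (norm_nonneg _).trans (hM 0 i i)
    have hN₀ : 0 ≤ N := (norm_nonneg _).trans (hN 0 i i le_rfl)
    rw [List.ofFn_succ, List.prod_cons]
    refine (norm_mul_apply_le_card_mul (c := Fintype.card ι ^ n * N * M ^ (n + 1))
      fun k => ?_).trans_eq (by ring)
    by_cases hik : w i ≤ w k
    · calc _ ≤ N * (Fintype.card ι ^ n * M ^ (n + 1)) :=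
            mul_le_mul (hN 0 i k hik) (norm_prod_ofFn_apply_le (fun t => hM t.succ) k j)
              (norm_nonneg _) hN₀
        _ = _ := by ring
    · have hk : #{q | w q < w k} ≤ n :=
        Nat.lt_succ_iff.1 ((card_filter_lt_lt_card_filter_lt (not_le.1 hik)).trans_le hi)
      calc _ ≤ M * (Fintype.card ι ^ n * N * M ^ n) :=
            mul_le_mul (hM 0 i k) (ih (fun t => hM t.succ) (fun t => hN t.succ) hk)
              (norm_nonneg _) hM₀
        _ = _ := by ring

end ProductEntries

theorem entry_norm_conjugated_power_bound_general
    (d : ℕ) (hd : 1 ≤ d)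
    (𝒜 : Set (Matrix (Fin d) (Fin d) ℂ))
    (h_bdd : ∃ M : ℝ, ∀ A ∈ 𝒜, entryNorm A ≤ M)
    (S : Matrix (Fin d) (Fin d) ℂ) (hS : IsUnit S) (hSdiag : S.IsDiag) :
    entrySetNorm ((fun B => S * B * S⁻¹) '' (𝒜 ^ d)) ≤
      (d : ℝ) ^ (d - 1) * entrySetNorm 𝒜 *
        entrySetNorm ((fun B => S * B * S⁻¹) '' 𝒜) ^ (d - 1) := by
  obtain ⟨n, rfl⟩ : ∃ n, d = n + 1 := ⟨d - 1, by omega⟩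
  obtain ⟨v, rfl⟩ : ∃ v, S = diagonal v := ⟨S.diag, hSdiag.diagonal_diag.symm⟩
  have hv : ∀ i, v i ≠ 0 := fun i => ((isUnit_diagonal.1 hS).apply i).ne_zero
  have h𝒜 : BddAbove (entryNorm '' 𝒜) :=
    let ⟨c, hc⟩ := h_bdd; ⟨c, Set.forall_mem_image.2 hc⟩
  have hN₀ := entrySetNorm_nonneg 𝒜
  have hM₀ := entrySetNorm_nonneg ((fun B => diagonal v * B * (diagonal v)⁻¹) '' 𝒜)
  refine entrySetNorm_le ?_ (by positivity)
  rintro _ ⟨_, hB, rfl⟩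
  obtain ⟨f, rfl⟩ := Set.mem_pow.1 hB
  dsimp only
  rw [mul_list_prod_mul_inv hS, List.map_ofFn]
  have hM : ∀ t p q, ‖(diagonal v * f t * (diagonal v)⁻¹) p q‖ ≤
      entrySetNorm ((fun B => diagonal v * B * (diagonal v)⁻¹) '' 𝒜) := fun t =>
    norm_apply_le_entrySetNorm (bddAbove_entryNorm_diagonal_conj hv h𝒜) ⟨f t, (f t).2, rfl⟩
  have hN : ∀ t p q, ‖v p‖ ≤ ‖v q‖ → ‖(diagonal v * f t * (diagonal v)⁻¹) p q‖ ≤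
      entrySetNorm 𝒜 := fun t p q hpq =>
    (norm_diagonal_mul_mul_inv_diagonal_apply_le_of_le hv _ hpq).trans
      (norm_apply_le_entrySetNorm h𝒜 (f t).2 p q)
  refine entryNorm_le (fun i j => ?_) (by positivity)
  refine (norm_prod_ofFn_apply_le_of_weight _ hM hN ?_ j).trans_eq (by simp)
  simpa using card_filter_lt_lt_card (fun p => ‖v p‖) i

/-- For every bounded nonempty set `𝒜` of `d×d` complex matrices and every invertible
diagonal matrix `S`: `‖S 𝒜^d S⁻¹‖₀ ≤ d^{d-1} · ‖𝒜‖₀ · ‖S 𝒜 S⁻¹‖₀^{d-1}`, where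
`‖·‖₀` is the max-entry norm. -/
theorem entry_norm_conjugated_power_bound
    (d : ℕ) (hd : 1 ≤ d)
    (𝒜 : Set (Matrix (Fin d) (Fin d) ℂ)) (h_ne : 𝒜.Nonempty)
    (h_bdd : ∃ M : ℝ, ∀ A ∈ 𝒜, entryNorm A ≤ M)
    (S : Matrix (Fin d) (Fin d) ℂ) (hS : IsUnit S) (hSdiag : S.IsDiag) :
    entrySetNorm ((fun B => S * B * S⁻¹) '' (𝒜 ^ d)) ≤
      (d : ℝ) ^ (d - 1) * entrySetNorm 𝒜 *
        entrySetNorm ((fun B => S * B * S⁻¹) '' 𝒜) ^ (d - 1) :=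
  entry_norm_conjugated_power_bound_general d hd 𝒜 h_bdd S hS hSdiag
end
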